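/- arXiv:1501.03453 — 7 statements merged into one kernel-verified Lean document; each statement's English description precedes it below -/
import Mathlib

section
/- Let q1, q2, q3, t1, t2, t3 be real numbers and let g be the 3×3 complex matrix g = (1/8)·[[q1, −i·t3, i·t2], [i·t3, q2, −i·t1], [−i·t2, i·t1, q3]]. Then g is positive semidefinite if and only if all of the following hold: q1 ≥ 0, q2 ≥ 0, q3 ≥ 0, q2·q3 ≥ t1², q1·q3 ≥ t2², q1·q2 ≥ t3², and q1·q2·q3 ≥ q1·t1² + q2·t2² + q3·t3². -/
open Complex Matrix
open scoped ComplexOrder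

set_option maxHeartbeats 1000000 in
private lemma gks_key (q1 q2 q3 t1 t2 t3 a1 a2 b1 b2 c1 c2 : ℝ)
    (h1 : 0 ≤ q1) (h2 : 0 ≤ q2) (h3 : 0 ≤ q3)
    (h4 : t1 ^ 2 ≤ q2 * q3) (h5 : t2 ^ 2 ≤ q1 * q3) (h6 : t3 ^ 2 ≤ q1 * q2)
    (h7 : q1 * t1 ^ 2 + q2 * t2 ^ 2 + q3 * t3 ^ 2 ≤ q1 * q2 * q3) :
    0 ≤ q1 * (a1 ^ 2 + a2 ^ 2) + q2 * (b1 ^ 2 + b2 ^ 2) + q3 * (c1 ^ 2 + c2 ^ 2)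
      - 2 * t1 * (b2 * c1 - b1 * c2) - 2 * t2 * (c2 * a1 - c1 * a2)
      - 2 * t3 * (a2 * b1 - a1 * b2) := by
  rcases h1.eq_or_lt with hq1 | hq1
  · have ht2 : t2 = 0 := by nlinarith [sq_nonneg t2]
    have ht3 : t3 = 0 := by nlinarith [sq_nonneg t3]
    subst ht2; subst ht3
    rcases h2.eq_or_lt with hq2 | hq2
    · have ht1 : t1 = 0 := by nlinarith [sq_nonneg t1]
      subst ht1
      nlinarith [mul_nonneg h3 (add_nonneg (sq_nonneg c1) (sq_nonneg c2)),
        mul_nonneg h2 (add_nonneg (sq_nonneg b1) (sq_nonneg b2)),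
        mul_nonneg h1 (add_nonneg (sq_nonneg a1) (sq_nonneg a2))]
    · nlinarith [sq_nonneg (q2 * b1 + t1 * c2), sq_nonneg (q2 * b2 - t1 * c1),
        mul_nonneg (sub_nonneg.2 h4) (add_nonneg (sq_nonneg c1) (sq_nonneg c2)),
        mul_nonneg h1 (add_nonneg (sq_nonneg a1) (sq_nonneg a2)), hq2,
        mul_nonneg (mul_nonneg h1 hq2.le) (add_nonneg (sq_nonneg a1) (sq_nonneg a2))]
  · rcases (sub_nonneg.2 h6).eq_or_lt with hA | hA
    · have h71 : q1 * t1 ^ 2 = 0 := by nlinarith [mul_nonneg h2 (sq_nonneg t2)]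
      have h72 : q2 * t2 ^ 2 = 0 := by nlinarith [mul_nonneg h1 (sq_nonneg t1)]
      have ht1 : t1 = 0 := by
        have h : t1 ^ 2 = 0 := (mul_eq_zero.1 h71).resolve_left hq1.ne'
        exact pow_eq_zero_iff two_ne_zero |>.1 h
      subst ht1
      have ht23 : t2 * t3 = 0 := by
        have h : (t2 * t3) ^ 2 = 0 := by nlinarith
        exact pow_eq_zero_iff two_ne_zero |>.1 h
      rcases mul_eq_zero.1 ht23 with ht | ht <;> subst ht
      · nlinarith [sq_nonneg (q1 * a1 + t3 * b2), sq_nonneg (q1 * a2 - t3 * b1),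
          mul_nonneg (mul_nonneg hq1.le h3) (add_nonneg (sq_nonneg c1) (sq_nonneg c2)),
          hA.le, hA.ge, sq_nonneg b1, sq_nonneg b2, hq1]
      · nlinarith [sq_nonneg (q1 * a1 - t2 * c2), sq_nonneg (q1 * a2 + t2 * c1),
          mul_nonneg (sub_nonneg.2 h5) (add_nonneg (sq_nonneg c1) (sq_nonneg c2)),
          mul_nonneg (mul_nonneg hq1.le h2) (add_nonneg (sq_nonneg b1) (sq_nonneg b2)), hq1]
    · have hD : 0 ≤ q1 * q2 * q3 - q1 * t1 ^ 2 - q2 * t2 ^ 2 - q3 * t3 ^ 2 := by linarith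
      have hG : 0 ≤ (q1 * q2 - t3 ^ 2) * (b1 ^ 2 + b2 ^ 2) + (q1 * q3 - t2 ^ 2) * (c1 ^ 2 + c2 ^ 2)
          + 2 * (t2 * t3) * (b1 * c1 + b2 * c2) + 2 * (q1 * t1) * (b1 * c2 - b2 * c1) := by
        nlinarith [sq_nonneg ((q1 * q2 - t3 ^ 2) * b1 + t2 * t3 * c1 + q1 * t1 * c2),
          sq_nonneg ((q1 * q2 - t3 ^ 2) * b2 + t2 * t3 * c2 - q1 * t1 * c1),
          mul_nonneg (mul_nonneg hq1.le hD) (add_nonneg (sq_nonneg c1) (sq_nonneg c2)), hA]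
      nlinarith [sq_nonneg (q1 * a1 + t3 * b2 - t2 * c2),
        sq_nonneg (q1 * a2 - t3 * b1 + t2 * c1), hG, hq1]

set_option maxHeartbeats 1000000 in
/-- The GKS matrix of a one-qubit Lindblad dissipator in canonical form is positive
semidefinite iff the damping parameters are nonnegative and the shift vector satisfies
the (denominator-free) ellipsoid conditions. -/
theorem gks_posSemidef_iff (q1 q2 q3 t1 t2 t3 : ℝ) :
    ((1 / 8 : ℂ) • !![(q1 : ℂ), -I * t3, I * t2;
                      I * t3, (q2 : ℂ), -I * t1;
                      -I * t2, I * t1, (q3 : ℂ)]).PosSemidef ↔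
      (0 ≤ q1 ∧ 0 ≤ q2 ∧ 0 ≤ q3 ∧
        t1 ^ 2 ≤ q2 * q3 ∧ t2 ^ 2 ≤ q1 * q3 ∧ t3 ^ 2 ≤ q1 * q2 ∧
        q1 * t1 ^ 2 + q2 * t2 ^ 2 + q3 * t3 ^ 2 ≤ q1 * q2 * q3) := by
  constructor
  · intro hM
    have hq1 : 0 ≤ q1 := by
      have h := hM.dotProduct_mulVec_nonneg ![1, 0, 0]
      simpa [Matrix.mulVec, dotProduct, Fin.sum_univ_three, Complex.le_def] using h
    have hq2 : 0 ≤ q2 := by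
      have h := hM.dotProduct_mulVec_nonneg ![0, 1, 0]
      simpa [Matrix.mulVec, dotProduct, Fin.sum_univ_three, Complex.le_def] using h
    have hq3 : 0 ≤ q3 := by
      have h := hM.dotProduct_mulVec_nonneg ![0, 0, 1]
      simpa [Matrix.mulVec, dotProduct, Fin.sum_univ_three, Complex.le_def] using h
    have h4 : t1 ^ 2 ≤ q2 * q3 := by
      have hfam : ∀ s : ℝ, 0 ≤ q3 * (s * s) + -(2 * t1 ^ 2) * s + q2 * t1 ^ 2 := by
        intro s
        have h := hM.dotProduct_mulVec_nonneg ![0, I * t1, (s : ℂ)]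
        simp [Matrix.mulVec, dotProduct, Fin.sum_univ_three, Complex.le_def] at h
        nlinarith [h]
      have hd := discrim_le_zero hfam
      rw [discrim] at hd
      nlinarith [mul_nonneg hq2 hq3, sq_nonneg t1, sq_nonneg (t1 * t1)]
    have h5 : t2 ^ 2 ≤ q1 * q3 := by
      have hfam : ∀ s : ℝ, 0 ≤ q1 * (s * s) + -(2 * t2 ^ 2) * s + q3 * t2 ^ 2 := by
        intro s
        have h := hM.dotProduct_mulVec_nonneg ![(s : ℂ), 0, I * t2]
        simp [Matrix.mulVec, dotProduct, Fin.sum_univ_three, Complex.le_def] at h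
        nlinarith [h]
      have hd := discrim_le_zero hfam
      rw [discrim] at hd
      nlinarith [mul_nonneg hq1 hq3, sq_nonneg t2, sq_nonneg (t2 * t2)]
    have h6 : t3 ^ 2 ≤ q1 * q2 := by
      have hfam : ∀ s : ℝ, 0 ≤ q2 * (s * s) + -(2 * t3 ^ 2) * s + q1 * t3 ^ 2 := by
        intro s
        have h := hM.dotProduct_mulVec_nonneg ![I * t3, (s : ℂ), 0]
        simp [Matrix.mulVec, dotProduct, Fin.sum_univ_three, Complex.le_def] at h
        nlinarith [h]
      have hd := discrim_le_zero hfam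
      rw [discrim] at hd
      nlinarith [mul_nonneg hq1 hq2, sq_nonneg t3, sq_nonneg (t3 * t3)]
    have h7 : q1 * t1 ^ 2 + q2 * t2 ^ 2 + q3 * t3 ^ 2 ≤ q1 * q2 * q3 := by
      set g := ((1 / 8 : ℂ) • !![(q1 : ℂ), -I * t3, I * t2;
                          I * t3, (q2 : ℂ), -I * t1;
                          -I * t2, I * t1, (q3 : ℂ)]) with hg
      have hH : g.IsHermitian := hM.1
      have hdet1 : g.det = ((∏ i, hH.eigenvalues i : ℝ) : ℂ) := by
        rw [hH.det_eq_prod_eigenvalues]; push_cast; rfl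
      have hpos : 0 ≤ ∏ i, hH.eigenvalues i :=
        Finset.prod_nonneg fun i _ => hM.eigenvalues_nonneg i
      have hdet2 : g.det
          = (((q1 * q2 * q3 - q1 * t1 ^ 2 - q2 * t2 ^ 2 - q3 * t3 ^ 2) / 512 : ℝ) : ℂ) := by
        rw [hg]
        simp [Matrix.det_fin_three, Matrix.smul_apply]
        apply Complex.ext <;> simp [Complex.ext_iff, ← Complex.ofReal_pow] <;> ring
      have heq : ((q1 * q2 * q3 - q1 * t1 ^ 2 - q2 * t2 ^ 2 - q3 * t3 ^ 2) / 512 : ℝ)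
          = ∏ i, hH.eigenvalues i := by
        have := hdet1.symm.trans hdet2
        exact_mod_cast this.symm
      nlinarith [hpos]
    exact ⟨hq1, hq2, hq3, h4, h5, h6, h7⟩
  · rintro ⟨h1, h2, h3, h4, h5, h6, h7⟩
    rw [Matrix.posSemidef_iff_dotProduct_mulVec]
    constructor
    · have hbase : (!![(q1 : ℂ), -I * t3, I * t2;
                       I * t3, (q2 : ℂ), -I * t1;
                       -I * t2, I * t1, (q3 : ℂ)]).IsHermitian := by
        rw [Matrix.IsHermitian]
        rw [Matrix.eta_fin_three (Matrix.conjTranspose _)]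
        simp [Matrix.conjTranspose_apply, Complex.ext_iff]
      have h8 : ((1 / 8 : ℂ) • !![(q1 : ℂ), -I * t3, I * t2;
                       I * t3, (q2 : ℂ), -I * t1;
                       -I * t2, I * t1, (q3 : ℂ)])ᴴ
          = (starRingEnd ℂ (1/8)) • (!![(q1 : ℂ), -I * t3, I * t2;
                       I * t3, (q2 : ℂ), -I * t1;
                       -I * t2, I * t1, (q3 : ℂ)])ᴴ := Matrix.conjTranspose_smul _ _
      rw [Matrix.IsHermitian, h8, hbase]
      simp [map_ofNat]
    · intro x
      simp only [Matrix.mulVec, dotProduct, Fin.sum_univ_three]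
      rw [Complex.le_def]
      constructor
      · simp
        nlinarith [gks_key q1 q2 q3 t1 t2 t3 (x 0).re (x 0).im (x 1).re (x 1).im
            (x 2).re (x 2).im h1 h2 h3 h4 h5 h6 h7]
      · simp
        ring
end

section
/- Let q1, q2, q3, t1, t2, t3 be real numbers with q1 > 0, q2 > 0, q3 > 0, and let g be the 3×3 complex matrix g = (1/8)·[[q1, −i·t3, i·t2], [i·t3, q2, −i·t1], [−i·t2, i·t1, q3]]. If g is positive semidefinite, then q1·q2 + q1·q3 + q2·q3 > t1² + t2² + t3² (strict inequality). -/
open Complex Matrix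
open scoped ComplexOrder

lemma gks_det_re_nonneg (M : Matrix (Fin 3) (Fin 3) ℂ) (h : M.PosSemidef) :
    0 ≤ M.det.re := by
  have hd : M.det = ((∏ i, h.isHermitian.eigenvalues i : ℝ) : ℂ) := by
    rw [h.isHermitian.det_eq_prod_eigenvalues]; norm_cast
  rw [hd, Complex.ofReal_re]
  exact Finset.prod_nonneg fun i _ => h.eigenvalues_nonneg i

/-- If all `q_j > 0` and the canonical GKS matrix is positive semidefinite,
then `A > t²` strictly. -/
theorem gks_A_gt_tsq (q1 q2 q3 t1 t2 t3 : ℝ)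
    (hq1 : 0 < q1) (hq2 : 0 < q2) (hq3 : 0 < q3)
    (hpsd : ((1 / 8 : ℂ) • !![(q1 : ℂ), -I * t3, I * t2;
                              I * t3, (q2 : ℂ), -I * t1;
                              -I * t2, I * t1, (q3 : ℂ)]).PosSemidef) :
    t1 ^ 2 + t2 ^ 2 + t3 ^ 2 < q1 * q2 + q1 * q3 + q2 * q3 := by
  -- 2×2 principal minors
  have h12 := hpsd.dotProduct_mulVec_nonneg ![(q2:ℂ), -I * t3, 0]
  rw [Complex.le_def] at h12
  obtain ⟨h12, -⟩ := h12
  simp [mulVec, dotProduct, Fin.sum_univ_three, Complex.ext_iff, Complex.add_re,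
    Complex.mul_re, Complex.mul_im] at h12
  have g3 : 0 ≤ q1 * q2 - t3 ^ 2 := by nlinarith [h12]
  have h13 := hpsd.dotProduct_mulVec_nonneg ![(q3:ℂ), 0, I * t2]
  rw [Complex.le_def] at h13
  obtain ⟨h13, -⟩ := h13
  simp [mulVec, dotProduct, Fin.sum_univ_three, Complex.ext_iff, Complex.add_re,
    Complex.mul_re, Complex.mul_im] at h13
  have g2 : 0 ≤ q1 * q3 - t2 ^ 2 := by nlinarith [h13]
  have h23 := hpsd.dotProduct_mulVec_nonneg ![0, (q3:ℂ), -I * t1]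
  rw [Complex.le_def] at h23
  obtain ⟨h23, -⟩ := h23
  simp [mulVec, dotProduct, Fin.sum_univ_three, Complex.ext_iff, Complex.add_re,
    Complex.mul_re, Complex.mul_im] at h23
  have g1 : 0 ≤ q2 * q3 - t1 ^ 2 := by nlinarith [h23]
  -- determinant
  have hdet := gks_det_re_nonneg _ hpsd
  simp [det_fin_three, Complex.ext_iff, Complex.add_re, Complex.mul_re,
    Complex.mul_im] at hdet
  have g4 : 0 ≤ q1 * q2 * q3 - q1 * t1 ^ 2 - q2 * t2 ^ 2 - q3 * t3 ^ 2 := by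
    nlinarith [hdet]
  nlinarith [mul_nonneg (le_of_lt hq1) g1,
    mul_nonneg (le_of_lt hq2) g2, mul_nonneg (le_of_lt hq3) g3,
    mul_nonneg (le_of_lt hq1) g2, mul_nonneg (le_of_lt hq1) g3,
    mul_nonneg (le_of_lt hq2) g1, mul_nonneg (le_of_lt hq2) g3,
    mul_nonneg (le_of_lt hq3) g1, mul_nonneg (le_of_lt hq3) g2,
    mul_pos (mul_pos hq1 hq2) hq3, g4]
end

section
/- Let q1, q2, q3, t1, t2, t3 be real numbers and let g be the 3×3 complex matrix g = (1/8)·[[q1, −i·t3, i·t2], [i·t3, q2, −i·t1], [−i·t2, i·t1, q3]], and suppose g is positive semidefinite. Then g has rank at most 1 (equivalently, at least two zero eigenvalues) if and only if q1·q2·q3 = q1·t1² + q2·t2² + q3·t3² and q1·q2 + q1·q3 + q2·q3 = t1² + t2² + t3². -/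
open Complex Matrix
open scoped ComplexOrder

lemma my_trace_eq {n : Type*} [Fintype n] [DecidableEq n] {A : Matrix n n ℂ}
    (hA : A.IsHermitian) : A.trace = ∑ i, (hA.eigenvalues i : ℂ) := by
  conv_lhs => rw [hA.spectral_theorem]
  rw [Unitary.conjStarAlgAut_apply]
  rw [trace_mul_cycle, (Matrix.mem_unitaryGroup_iff').mp hA.eigenvectorUnitary.2,
    one_mul, trace_diagonal]
  simp

lemma my_trace_sq_eq {n : Type*} [Fintype n] [DecidableEq n] {A : Matrix n n ℂ}
    (hA : A.IsHermitian) : (A * A).trace = ∑ i, (hA.eigenvalues i : ℂ) ^ 2 := by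
  set U := (hA.eigenvectorUnitary : Matrix n n ℂ) with hUdef
  set D := diagonal (RCLike.ofReal ∘ hA.eigenvalues : n → ℂ) with hDdef
  have hU : star U * U = 1 := (Matrix.mem_unitaryGroup_iff').mp hA.eigenvectorUnitary.2
  have key : A * A = U * (D * D) * star U := by
    conv_lhs => rw [hA.spectral_theorem]
    calc (U * D * star U) * (U * D * star U)
        = U * (D * ((star U * U) * (D * star U))) := by simp only [mul_assoc]
      _ = U * (D * D) * star U := by rw [hU, one_mul]; simp only [mul_assoc]
  rw [key, trace_mul_cycle, hU, one_mul, hDdef, diagonal_mul_diagonal, trace_diagonal]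
  simp [sq]

/-- A positive semidefinite canonical GKS matrix has rank at most 1 (at least two zero
eigenvalues) iff `Q = B` and `A = t²`. -/
theorem gks_rank_le_one_iff (q1 q2 q3 t1 t2 t3 : ℝ)
    (hpsd : ((1 / 8 : ℂ) • !![(q1 : ℂ), -I * t3, I * t2;
                              I * t3, (q2 : ℂ), -I * t1;
                              -I * t2, I * t1, (q3 : ℂ)]).PosSemidef) :
    ((1 / 8 : ℂ) • !![(q1 : ℂ), -I * t3, I * t2;
                      I * t3, (q2 : ℂ), -I * t1;
                      -I * t2, I * t1, (q3 : ℂ)]).rank ≤ 1 ↔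
      (q1 * q2 * q3 = q1 * t1 ^ 2 + q2 * t2 ^ 2 + q3 * t3 ^ 2 ∧
        q1 * q2 + q1 * q3 + q2 * q3 = t1 ^ 2 + t2 ^ 2 + t3 ^ 2) := by
  set M : Matrix (Fin 3) (Fin 3) ℂ :=
    (1 / 8 : ℂ) • !![(q1 : ℂ), -I * t3, I * t2;
                      I * t3, (q2 : ℂ), -I * t1;
                      -I * t2, I * t1, (q3 : ℂ)] with hM
  have hH : M.IsHermitian := hpsd.1
  set l : Fin 3 → ℝ := hH.eigenvalues with hl
  have hnn : ∀ i, 0 ≤ l i := fun i => hpsd.eigenvalues_nonneg i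
  -- trace identity
  have e1 : l 0 + l 1 + l 2 = (q1 + q2 + q3) / 8 := by
    have h1 : M.trace = (((q1 + q2 + q3) / 8 : ℝ) : ℂ) := by
      rw [hM]; simp [Matrix.trace_fin_three]; ring
    have h2 := my_trace_eq hH
    rw [h1, Fin.sum_univ_three] at h2
    rw [hl]
    exact_mod_cast h2.symm
  -- trace of square identity
  have e2 : l 0 ^ 2 + l 1 ^ 2 + l 2 ^ 2
      = (q1 ^ 2 + q2 ^ 2 + q3 ^ 2 + 2 * (t1 ^ 2 + t2 ^ 2 + t3 ^ 2)) / 64 := by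
    have h1 : (M * M).trace
        = (((q1 ^ 2 + q2 ^ 2 + q3 ^ 2 + 2 * (t1 ^ 2 + t2 ^ 2 + t3 ^ 2)) / 64 : ℝ) : ℂ) := by
      rw [hM]
      simp [Matrix.trace_fin_three, Matrix.mul_apply, Fin.sum_univ_three]
      ring_nf
      simp [Complex.I_sq]
      ring
    have h2 := my_trace_sq_eq hH
    rw [h1, Fin.sum_univ_three] at h2
    rw [hl]
    exact_mod_cast h2.symm
  -- determinant identity
  have e3 : l 0 * l 1 * l 2
      = (q1 * q2 * q3 - (q1 * t1 ^ 2 + q2 * t2 ^ 2 + q3 * t3 ^ 2)) / 512 := by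
    have h1 : M.det
        = (((q1 * q2 * q3 - (q1 * t1 ^ 2 + q2 * t2 ^ 2 + q3 * t3 ^ 2)) / 512 : ℝ) : ℂ) := by
      rw [hM, Matrix.det_smul, Matrix.det_fin_three]
      simp
      ring_nf
      simp [Complex.I_sq]
      ring
    have h2 := hH.det_eq_prod_eigenvalues
    rw [h1, Fin.prod_univ_three] at h2
    rw [hl]
    have h3 : (((q1 * q2 * q3 - (q1 * t1 ^ 2 + q2 * t2 ^ 2 + q3 * t3 ^ 2)) / 512 : ℝ) : ℂ)
        = ((hH.eigenvalues 0 : ℝ) : ℂ) * ((hH.eigenvalues 1 : ℝ) : ℂ)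
          * ((hH.eigenvalues 2 : ℝ) : ℂ) := h2
    exact_mod_cast h3.symm
  have hrank : M.rank = Fintype.card {i // l i ≠ 0} := hH.rank_eq_card_non_zero_eigs
  rw [hrank]
  constructor
  · intro hcard
    have hsub := Fintype.card_le_one_iff.mp hcard
    have hpair : ∀ i j : Fin 3, i ≠ j → l i * l j = 0 := by
      intro i j hij
      by_contra h
      exact hij (congrArg Subtype.val
        (hsub ⟨i, left_ne_zero_of_mul h⟩ ⟨j, right_ne_zero_of_mul h⟩))
    have p01 := hpair 0 1 (by decide)
    have p02 := hpair 0 2 (by decide)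
    have p12 := hpair 1 2 (by decide)
    constructor
    · have h0 : l 0 * l 1 * l 2 = 0 := by rw [p01]; ring
      rw [e3] at h0
      linarith
    · linear_combination (-32 : ℝ) * ((l 0 + l 1 + l 2) + (q1 + q2 + q3) / 8) * e1
        + 32 * e2 + 64 * p01 + 64 * p02 + 64 * p12
  · rintro ⟨hQ, hA⟩
    have hsum : l 0 * l 1 + l 0 * l 2 + l 1 * l 2 = 0 := by
      linear_combination (((l 0 + l 1 + l 2) + (q1 + q2 + q3) / 8) / 2) * e1
        - e2 / 2 + hA / 64
    have n01 := mul_nonneg (hnn 0) (hnn 1)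
    have n02 := mul_nonneg (hnn 0) (hnn 2)
    have n12 := mul_nonneg (hnn 1) (hnn 2)
    have p01 : l 0 * l 1 = 0 := by linarith
    have p02 : l 0 * l 2 = 0 := by linarith
    have p12 : l 1 * l 2 = 0 := by linarith
    have hzero : ∀ i j : Fin 3, i ≠ j → l i * l j = 0 := by
      have p10 : l 1 * l 0 = 0 := by rw [mul_comm]; exact p01
      have p20 : l 2 * l 0 = 0 := by rw [mul_comm]; exact p02
      have p21 : l 2 * l 1 = 0 := by rw [mul_comm]; exact p12
      clear_value l
      clear hrank e1 e2 e3 hsum hnn n01 n02 n12 hl hH hpsd hM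
      intro i j hij
      fin_cases i <;> fin_cases j <;> simp_all
    apply Fintype.card_le_one_iff.mpr
    rintro ⟨i, hi⟩ ⟨j, hj⟩
    simp only [Subtype.mk.injEq]
    by_contra hij
    exact mul_ne_zero hi hj (hzero i j hij)
end

section
/- Let L = {λ ∈ ℝ³ : 0 < λ1 ≤ 1, 0 < λ2 ≤ 1, 0 < λ3 ≤ 1, λ1 ≥ λ2·λ3, λ2 ≥ λ1·λ3, λ3 ≥ λ1·λ2} and let T = {λ ∈ ℝ³ : λ1 ≥ 0, λ2 ≥ 0, λ3 ≥ 0, λ1 + λ2 ≤ 1 + λ3, λ1 + λ3 ≤ 1 + λ2, λ2 + λ3 ≤ 1 + λ1}. Then the Lebesgue volume of L equals one half of the Lebesgue volume of T; explicitly, vol(L) = 1/4 and vol(T) = 1/2. -/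
open MeasureTheory Real intervalIntegral

lemma lin_integral (a b c d : ℝ) : ∫ y in a..b, (c + d * y) = c*(b-a) + d*(b^2-a^2)/2 := by
  rw [intervalIntegral.integral_add (intervalIntegrable_const)
    ((by fun_prop : Continuous fun y : ℝ => d * y).intervalIntegrable a b),
    intervalIntegral.integral_const, intervalIntegral.integral_const_mul, integral_id]
  simp; ring

noncomputable def fT (x y : ℝ) : ℝ := min (1+y-x) (1+x-y) - max 0 (x+y-1)

lemma fT_cont (x : ℝ) : Continuous (fT x) := by
  unfold fT; fun_prop

lemma fT_int (x : ℝ) : ∫ y in (0:ℝ)..1, fT x y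
    = (∫ y in (0:ℝ)..1, min (1+y-x) (1+x-y)) - ∫ y in (0:ℝ)..1, max 0 (x+y-1) := by
  unfold fT
  exact intervalIntegral.integral_sub ((by fun_prop : Continuous fun y:ℝ => min (1+y-x) (1+x-y)).intervalIntegrable 0 1)
    ((by fun_prop : Continuous fun y:ℝ => max 0 (x+y-1)).intervalIntegrable 0 1)

lemma fT_int_val {x : ℝ} (h0 : 0 ≤ x) (h1 : x ≤ 1) :
    ∫ y in (0:ℝ)..1, fT x y = 1/2 + x - 3/2*x^2 := by
  rw [fT_int]
  have hmin : (∫ y in (0:ℝ)..1, min (1+y-x) (1+x-y)) = 1/2 + x - x^2 := by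
    rw [← intervalIntegral.integral_add_adjacent_intervals (a := 0) (b := x) (c := 1)
      ((by fun_prop : Continuous fun y:ℝ => min (1+y-x) (1+x-y)).intervalIntegrable 0 x)
      ((by fun_prop : Continuous fun y:ℝ => min (1+y-x) (1+x-y)).intervalIntegrable x 1)]
    have e1 : ∫ y in (0:ℝ)..x, min (1+y-x) (1+x-y) = ∫ y in (0:ℝ)..x, ((1-x) + 1*y) := by
      apply intervalIntegral.integral_congr
      intro y hy
      rw [Set.uIcc_of_le h0] at hy
      have : y ≤ x := hy.2
      simp only [min_eq_left (by linarith : 1+y-x ≤ 1+x-y)]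
      ring
    have e2 : ∫ y in x..(1:ℝ), min (1+y-x) (1+x-y) = ∫ y in x..(1:ℝ), ((1+x) + (-1)*y) := by
      apply intervalIntegral.integral_congr
      intro y hy
      rw [Set.uIcc_of_le h1] at hy
      have : x ≤ y := hy.1
      simp only [min_eq_right (by linarith : 1+x-y ≤ 1+y-x)]
      ring
    rw [e1, e2, lin_integral, lin_integral]
    ring
  have hmax : (∫ y in (0:ℝ)..1, max 0 (x+y-1)) = x^2/2 := by
    rw [← intervalIntegral.integral_add_adjacent_intervals (a := 0) (b := 1-x) (c := 1)
      ((by fun_prop : Continuous fun y:ℝ => max 0 (x+y-1)).intervalIntegrable 0 (1-x))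
      ((by fun_prop : Continuous fun y:ℝ => max 0 (x+y-1)).intervalIntegrable (1-x) 1)]
    have e1 : ∫ y in (0:ℝ)..(1-x), max 0 (x+y-1) = ∫ y in (0:ℝ)..(1-x), ((0:ℝ) + 0*y) := by
      apply intervalIntegral.integral_congr
      intro y hy
      rw [Set.uIcc_of_le (by linarith : (0:ℝ) ≤ 1-x)] at hy
      have : y ≤ 1-x := hy.2
      simp only [max_eq_left (by linarith : x+y-1 ≤ 0)]
      ring
    have e2 : ∫ y in (1-x)..(1:ℝ), max 0 (x+y-1) = ∫ y in (1-x)..(1:ℝ), ((x-1) + 1*y) := by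
      apply intervalIntegral.integral_congr
      intro y hy
      rw [Set.uIcc_of_le (by linarith : 1-x ≤ (1:ℝ))] at hy
      have : 1-x ≤ y := hy.1
      simp only [max_eq_right (by linarith : (0:ℝ) ≤ x+y-1)]
      ring
    rw [e1, e2, lin_integral, lin_integral]
    ring
  rw [hmin, hmax]; ring

lemma volT : volume {p : ℝ × ℝ × ℝ | 0 ≤ p.1 ∧ 0 ≤ p.2.1 ∧ 0 ≤ p.2.2 ∧
      p.1 + p.2.1 ≤ 1 + p.2.2 ∧ p.1 + p.2.2 ≤ 1 + p.2.1 ∧ p.2.1 + p.2.2 ≤ 1 + p.1} = 1/2 := by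
  set T : Set (ℝ × ℝ × ℝ) := {p : ℝ × ℝ × ℝ | 0 ≤ p.1 ∧ 0 ≤ p.2.1 ∧ 0 ≤ p.2.2 ∧
      p.1 + p.2.1 ≤ 1 + p.2.2 ∧ p.1 + p.2.2 ≤ 1 + p.2.1 ∧ p.2.1 + p.2.2 ≤ 1 + p.1} with hT
  have hTm : MeasurableSet T := by
    rw [hT]
    simp only [Set.setOf_and]
    repeat' apply MeasurableSet.inter
    all_goals exact measurableSet_le (by fun_prop) (by fun_prop)
  rw [Measure.volume_eq_prod, Measure.prod_apply hTm]
  have hslice : ∀ x : ℝ, (volume : Measure (ℝ×ℝ)) (Prod.mk x ⁻¹' T)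
      = ∫⁻ y, (if 0 ≤ x ∧ 0 ≤ y then ENNReal.ofReal (fT x y) else 0) := by
    intro x
    rw [Measure.volume_eq_prod, Measure.prod_apply (hTm.preimage measurable_prodMk_left)]
    refine lintegral_congr fun y => ?_
    have hset : Prod.mk y ⁻¹' (Prod.mk x ⁻¹' T)
        = if 0 ≤ x ∧ 0 ≤ y then Set.Icc (max 0 (x+y-1)) (min (1+y-x) (1+x-y)) else ∅ := by
      split_ifs with h
      · ext z
        simp only [hT, Set.mem_preimage, Set.mem_setOf_eq, Set.mem_Icc, max_le_iff, le_min_iff]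
        constructor
        · rintro ⟨-, -, hz, h1, h2, h3⟩
          exact ⟨⟨hz, by linarith⟩, by constructor <;> linarith⟩
        · rintro ⟨⟨hz0, hz1⟩, hz2, hz3⟩
          exact ⟨h.1, h.2, hz0, by linarith, by linarith, by linarith⟩
      · ext z
        simp only [hT, Set.mem_preimage, Set.mem_setOf_eq, Set.mem_empty_iff_false, iff_false]
        rintro ⟨hx, hy, -⟩
        exact h ⟨hx, hy⟩
    rw [hset]
    split_ifs with h
    · rw [Real.volume_Icc]; rfl
    · simp
  simp only [hslice]
  have hmid : ∀ x : ℝ, (∫⁻ y, (if 0 ≤ x ∧ 0 ≤ y then ENNReal.ofReal (fT x y) else 0))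
      = Set.indicator (Set.Icc (0:ℝ) 1) (fun x => ENNReal.ofReal (1/2 + x - 3/2*x^2)) x := by
    intro x
    by_cases hx : x ∈ Set.Icc (0:ℝ) 1
    · rw [Set.indicator_of_mem hx]
      obtain ⟨hx0, hx1⟩ := hx
      have hfun : (fun y => if 0 ≤ x ∧ 0 ≤ y then ENNReal.ofReal (fT x y) else 0)
          = Set.indicator (Set.Icc (0:ℝ) 1) (fun y => ENNReal.ofReal (fT x y)) := by
        funext y
        by_cases hy : y ∈ Set.Icc (0:ℝ) 1
        · rw [Set.indicator_of_mem hy, if_pos ⟨hx0, hy.1⟩]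
        · rw [Set.indicator_of_notMem hy]
          rcases lt_or_ge y 0 with h | h
          · rw [if_neg]; rintro ⟨-, hy0⟩; linarith
          · have hy1 : 1 < y := by
              by_contra hc; push_neg at hc; exact hy ⟨h, hc⟩
            rw [if_pos ⟨hx0, h⟩, ENNReal.ofReal_eq_zero.mpr]
            have h1 := min_le_right (1+y-x) (1+x-y)
            have h2 := le_max_right (0:ℝ) (x+y-1)
            unfold fT; linarith
      rw [hfun, lintegral_indicator measurableSet_Icc,
        ← ofReal_integral_eq_lintegral_ofReal]
      · congr 1
        rw [integral_Icc_eq_integral_Ioc, ← intervalIntegral.integral_of_le zero_le_one]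
        exact fT_int_val hx0 hx1
      · exact (fT_cont x).integrableOn_Icc
      · refine (ae_restrict_iff' measurableSet_Icc).2 (Filter.Eventually.of_forall fun y hy => ?_)
        obtain ⟨hy0, hy1⟩ := hy
        have h1 : max 0 (x+y-1) ≤ min (1+y-x) (1+x-y) :=
          max_le (le_min (by linarith) (by linarith)) (le_min (by linarith) (by linarith))
        exact sub_nonneg.mpr h1
    · rw [Set.indicator_of_notMem hx]
      rcases lt_or_ge x 0 with h | h
      · have hz : ∀ y : ℝ, (if 0 ≤ x ∧ 0 ≤ y then ENNReal.ofReal (fT x y) else 0) = 0 :=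
          fun y => if_neg (by rintro ⟨h0, -⟩; linarith)
        rw [lintegral_congr hz, lintegral_zero]
      · have hx1 : 1 < x := by by_contra hc; push_neg at hc; exact hx ⟨h, hc⟩
        have hz : ∀ y : ℝ, (if 0 ≤ x ∧ 0 ≤ y then ENNReal.ofReal (fT x y) else 0) = 0 := by
          intro y
          split_ifs with hcond
          · apply ENNReal.ofReal_eq_zero.mpr
            have h1 := min_le_left (1+y-x) (1+x-y)
            have h2 := le_max_right (0:ℝ) (x+y-1)
            unfold fT; linarith
          · rfl
        rw [lintegral_congr hz, lintegral_zero]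
  simp only [hmid]
  rw [lintegral_indicator measurableSet_Icc, ← ofReal_integral_eq_lintegral_ofReal]
  · have hval : ∫ x in Set.Icc (0:ℝ) 1, (1/2 + x - 3/2*x^2) = 1/2 := by
      rw [integral_Icc_eq_integral_Ioc, ← intervalIntegral.integral_of_le zero_le_one]
      have h1 : ∀ x : ℝ, 1/2 + x - 3/2*x^2 = (1/2 + 1*x) - (3/2)*x^2 := fun x => by ring
      simp_rw [h1]
      rw [intervalIntegral.integral_sub
        ((by fun_prop : Continuous fun x:ℝ => 1/2 + 1*x).intervalIntegrable 0 1)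
        ((by fun_prop : Continuous fun x:ℝ => (3/2)*x^2).intervalIntegrable 0 1),
        lin_integral, intervalIntegral.integral_const_mul, integral_pow]
      norm_num
    rw [hval, ENNReal.ofReal_div_of_pos (by norm_num), ENNReal.ofReal_one,
      ENNReal.ofReal_ofNat]
  · exact (by fun_prop : Continuous fun x:ℝ => 1/2 + x - 3/2*x^2).integrableOn_Icc
  · refine (ae_restrict_iff' measurableSet_Icc).2 (Filter.Eventually.of_forall fun x hx => ?_)
    obtain ⟨hx0, hx1⟩ := hx
    have : (0:ℝ) ≤ 1/2 + x - 3/2*x^2 := by nlinarith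
    exact this

lemma xlogx_integral : ∫ x in (0:ℝ)..1, x * Real.log x = -(1/4) := by
  have hF : ∀ x ∈ Set.Ioo (0:ℝ) 1, HasDerivAt (fun x : ℝ => x/2*(x*Real.log x) - x^2/4)
      (x * Real.log x) x := by
    intro x hx
    have h1 : HasDerivAt (fun x : ℝ => x/2*(x*Real.log x))
        (1/2*(x*Real.log x) + x/2*(1*Real.log x + x*x⁻¹)) x :=
      (((hasDerivAt_id x).div_const 2).mul
        ((hasDerivAt_id x).mul (Real.hasDerivAt_log (ne_of_gt hx.1))))
    have h2 : HasDerivAt (fun x : ℝ => x^2/4) (x/2) x := by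
      have := ((hasDerivAt_pow 2 x).div_const 4)
      exact this.congr_deriv (by norm_num; ring)
    have := h1.sub h2
    refine this.congr_deriv ?_
    rw [mul_inv_cancel₀ (ne_of_gt hx.1)]
    ring
  have hcont : ContinuousOn (fun x : ℝ => x/2*(x*Real.log x) - x^2/4) (Set.Icc 0 1) :=
    (((continuous_id.div_const 2).mul Real.continuous_mul_log).sub
      ((continuous_pow 2).div_const 4)).continuousOn
  have hint : IntervalIntegrable (fun x : ℝ => x * Real.log x) volume 0 1 :=
    Real.continuous_mul_log.intervalIntegrable 0 1
  have := intervalIntegral.integral_eq_sub_of_hasDeriv_right_of_le zero_le_one hcont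
    (fun x hx => (hF x hx).hasDerivWithinAt) hint
  rw [this]; simp [Real.log_one]

noncomputable def fL (x y : ℝ) : ℝ := min 1 (min (x/y) (y/x)) - x*y

lemma fL_eq1 {x y : ℝ} (hx0 : 0 < x) (hy0 : 0 ≤ y) (hyx : y ≤ x) :
    fL x y = 0 + (1/x - x)*y := by
  rcases eq_or_lt_of_le hy0 with h | h
  · simp [fL, ← h]
  · unfold fL
    have h1 : y/x ≤ x/y := by
      rw [div_le_div_iff₀ hx0 h]; nlinarith
    have h2 : y/x ≤ 1 := by rw [div_le_one hx0]; linarith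
    rw [min_eq_right h1, min_eq_right h2]
    field_simp
    ring

lemma fL_eq2 {x y : ℝ} (hx0 : 0 < x) (hxy : x ≤ y) :
    fL x y = x*(1/y) - x*y := by
  have hy0 : 0 < y := lt_of_lt_of_le hx0 hxy
  unfold fL
  have h1 : x/y ≤ y/x := by
    rw [div_le_div_iff₀ hy0 hx0]; nlinarith
  have h2 : x/y ≤ 1 := by rw [div_le_one hy0]; linarith
  rw [min_eq_left h1, min_eq_right h2]
  ring

lemma fL_nonneg {x y : ℝ} (hx0 : 0 < x) (hx1 : x ≤ 1) (hy0 : 0 ≤ y) (hy1 : y ≤ 1) :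
    0 ≤ fL x y := by
  rcases le_total y x with h | h
  · rw [fL_eq1 hx0 hy0 h]
    have : x ≤ 1/x := by rw [le_div_iff₀ hx0]; nlinarith
    nlinarith
  · rw [fL_eq2 hx0 h]
    have hy0' : 0 < y := lt_of_lt_of_le hx0 h
    have : y ≤ 1/y := by rw [le_div_iff₀ hy0']; nlinarith
    nlinarith

lemma fL_le_one {x y : ℝ} (hx0 : 0 ≤ x) (hy0 : 0 ≤ y) : fL x y ≤ 1 := by
  unfold fL
  have := min_le_left (1:ℝ) (min (x/y) (y/x))
  nlinarith

lemma fL_integrableOn (x : ℝ) (hx0 : 0 < x) (hx1 : x ≤ 1) :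
    IntegrableOn (fL x) (Set.Icc (0:ℝ) 1) := by
  apply Measure.integrableOn_of_bounded (M := 1)
  · rw [Real.volume_Icc]; exact ENNReal.ofReal_ne_top
  · apply Measurable.aestronglyMeasurable
    unfold fL
    exact (measurable_const.min ((measurable_const.div measurable_id).min
      (measurable_id.div measurable_const))).sub (measurable_const.mul measurable_id)
  · refine (ae_restrict_iff' measurableSet_Icc).2 (Filter.Eventually.of_forall fun y hy => ?_)
    rw [Real.norm_eq_abs, abs_le]
    constructor
    · linarith [fL_nonneg hx0 hx1 hy.1 hy.2]
    · exact fL_le_one (le_of_lt hx0) hy.1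

lemma fL_int_val {x : ℝ} (hx0 : 0 < x) (hx1 : x ≤ 1) :
    ∫ y in (0:ℝ)..1, fL x y = -(x * Real.log x) := by
  have hx0' : (0:ℝ) ≤ x := le_of_lt hx0
  have hint1 : IntervalIntegrable (fL x) volume 0 x := by
    rw [intervalIntegrable_iff_integrableOn_Ioc_of_le hx0']
    have hg : IntegrableOn (fun y : ℝ => 0 + (1/x - x)*y) (Set.Ioc (0:ℝ) x) :=
      ((continuous_const.add (continuous_const.mul continuous_id')).integrableOn_Icc
        (a := 0) (b := x)).mono_set Set.Ioc_subset_Icc_self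
    exact hg.congr_fun (fun y hy => (fL_eq1 hx0 (le_of_lt hy.1) hy.2).symm) measurableSet_Ioc
  have hint2 : IntervalIntegrable (fL x) volume x 1 := by
    rw [intervalIntegrable_iff_integrableOn_Ioc_of_le hx1]
    have hcont : ContinuousOn (fun y : ℝ => x*(1/y) - x*y) (Set.Icc x 1) := by
      apply ContinuousOn.sub
      · exact continuousOn_const.mul (continuousOn_const.div continuousOn_id
          (fun y hy => ne_of_gt (lt_of_lt_of_le hx0 hy.1)))
      · fun_prop
    have hg : IntegrableOn (fun y : ℝ => x*(1/y) - x*y) (Set.Ioc x 1) :=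
      (hcont.integrableOn_Icc).mono_set Set.Ioc_subset_Icc_self
    exact hg.congr_fun (fun y hy => (fL_eq2 hx0 (le_of_lt hy.1)).symm) measurableSet_Ioc
  rw [← intervalIntegral.integral_add_adjacent_intervals hint1 hint2]
  have e1 : ∫ y in (0:ℝ)..x, fL x y = x/2 - x^3/2 := by
    have : ∫ y in (0:ℝ)..x, fL x y = ∫ y in (0:ℝ)..x, (0 + (1/x - x)*y) := by
      apply intervalIntegral.integral_congr
      intro y hy
      rw [Set.uIcc_of_le hx0'] at hy
      exact fL_eq1 hx0 hy.1 hy.2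
    rw [this, lin_integral]
    field_simp
    ring
  have e2 : ∫ y in x..(1:ℝ), fL x y = -(x * Real.log x) - x/2 + x^3/2 := by
    have h0 : (0:ℝ) ∉ Set.uIcc x 1 := by
      rw [Set.uIcc_of_le hx1]
      rintro ⟨h, -⟩; linarith
    have : ∫ y in x..(1:ℝ), fL x y = ∫ y in x..(1:ℝ), (x*(1/y) - x*y) := by
      apply intervalIntegral.integral_congr
      intro y hy
      rw [Set.uIcc_of_le hx1] at hy
      exact fL_eq2 hx0 hy.1
    rw [this, intervalIntegral.integral_sub]
    · rw [intervalIntegral.integral_const_mul, intervalIntegral.integral_const_mul,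
        integral_one_div h0, integral_id]
      rw [one_div, Real.log_inv]
      ring
    · apply IntervalIntegrable.const_mul
      apply intervalIntegrable_one_div (f := fun y : ℝ => y) _ continuous_id.continuousOn
      intro y hy
      rw [Set.uIcc_of_le hx1] at hy
      exact ne_of_gt (lt_of_lt_of_le hx0 hy.1)
    · exact ((continuous_const.mul continuous_id').intervalIntegrable x 1)
  rw [e1, e2]; ring

lemma volL : volume {p : ℝ × ℝ × ℝ | 0 < p.1 ∧ p.1 ≤ 1 ∧ 0 < p.2.1 ∧ p.2.1 ≤ 1 ∧
      0 < p.2.2 ∧ p.2.2 ≤ 1 ∧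
      p.2.1 * p.2.2 ≤ p.1 ∧ p.1 * p.2.2 ≤ p.2.1 ∧ p.1 * p.2.1 ≤ p.2.2} = 1/4 := by
  set L : Set (ℝ × ℝ × ℝ) := {p : ℝ × ℝ × ℝ | 0 < p.1 ∧ p.1 ≤ 1 ∧ 0 < p.2.1 ∧ p.2.1 ≤ 1 ∧
      0 < p.2.2 ∧ p.2.2 ≤ 1 ∧
      p.2.1 * p.2.2 ≤ p.1 ∧ p.1 * p.2.2 ≤ p.2.1 ∧ p.1 * p.2.1 ≤ p.2.2} with hL
  have hLm : MeasurableSet L := by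
    rw [hL]
    simp only [Set.setOf_and]
    repeat' apply MeasurableSet.inter
    · exact measurableSet_lt (by fun_prop) (by fun_prop)
    · exact measurableSet_le (by fun_prop) (by fun_prop)
    · exact measurableSet_lt (by fun_prop) (by fun_prop)
    · exact measurableSet_le (by fun_prop) (by fun_prop)
    · exact measurableSet_lt (by fun_prop) (by fun_prop)
    · exact measurableSet_le (by fun_prop) (by fun_prop)
    · exact measurableSet_le (by fun_prop) (by fun_prop)
    · exact measurableSet_le (by fun_prop) (by fun_prop)
    · exact measurableSet_le (by fun_prop) (by fun_prop)
  rw [Measure.volume_eq_prod, Measure.prod_apply hLm]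
  have hslice : ∀ x : ℝ, (volume : Measure (ℝ×ℝ)) (Prod.mk x ⁻¹' L)
      = ∫⁻ y, (if 0 < x ∧ x ≤ 1 ∧ 0 < y ∧ y ≤ 1 then ENNReal.ofReal (fL x y) else 0) := by
    intro x
    rw [Measure.volume_eq_prod, Measure.prod_apply (hLm.preimage measurable_prodMk_left)]
    refine lintegral_congr fun y => ?_
    have hset : Prod.mk y ⁻¹' (Prod.mk x ⁻¹' L)
        = if 0 < x ∧ x ≤ 1 ∧ 0 < y ∧ y ≤ 1 then
            Set.Icc (x*y) (min 1 (min (x/y) (y/x))) else ∅ := by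
      split_ifs with h
      · obtain ⟨hx0, hx1, hy0, hy1⟩ := h
        ext z
        simp only [hL, Set.mem_preimage, Set.mem_setOf_eq, Set.mem_Icc, le_min_iff]
        constructor
        · rintro ⟨-, -, -, -, hz0, hz1, h1, h2, h3⟩
          refine ⟨h3, hz1, ?_, ?_⟩
          · rw [le_div_iff₀ hy0]; nlinarith
          · rw [le_div_iff₀ hx0]; nlinarith
        · rintro ⟨hz0, hz1, hz2, hz3⟩
          rw [le_div_iff₀ hy0] at hz2
          rw [le_div_iff₀ hx0] at hz3
          exact ⟨hx0, hx1, hy0, hy1, lt_of_lt_of_le (mul_pos hx0 hy0) hz0, hz1,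
            by nlinarith, by nlinarith, hz0⟩
      · ext z
        simp only [hL, Set.mem_preimage, Set.mem_setOf_eq, Set.mem_empty_iff_false, iff_false]
        rintro ⟨hx0, hx1, hy0, hy1, -⟩
        exact h ⟨hx0, hx1, hy0, hy1⟩
    rw [hset]
    split_ifs with h
    · rw [Real.volume_Icc]; rfl
    · simp
  simp only [hslice]
  have hmid : ∀ x : ℝ,
      (∫⁻ y, (if 0 < x ∧ x ≤ 1 ∧ 0 < y ∧ y ≤ 1 then ENNReal.ofReal (fL x y) else 0))
      = Set.indicator (Set.Icc (0:ℝ) 1) (fun x => ENNReal.ofReal (-(x * Real.log x))) x := by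
    intro x
    by_cases hx : x ∈ Set.Icc (0:ℝ) 1
    · obtain ⟨hx0, hx1⟩ := hx
      rcases eq_or_lt_of_le hx0 with h | h
      · have hz : ∀ y : ℝ, (if 0 < x ∧ x ≤ 1 ∧ 0 < y ∧ y ≤ 1 then
            ENNReal.ofReal (fL x y) else 0) = 0 := by
          intro y
          apply if_neg
          rintro ⟨h0, -⟩
          rw [← h] at h0
          exact lt_irrefl 0 h0
        rw [lintegral_congr hz, lintegral_zero, Set.indicator_of_mem (Set.mem_Icc.mpr ⟨hx0, hx1⟩), ← h]
        simp
      · rw [Set.indicator_of_mem (Set.mem_Icc.mpr ⟨hx0, hx1⟩)]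
        have hfun : (fun y => if 0 < x ∧ x ≤ 1 ∧ 0 < y ∧ y ≤ 1 then
              ENNReal.ofReal (fL x y) else 0)
            = Set.indicator (Set.Icc (0:ℝ) 1) (fun y => ENNReal.ofReal (fL x y)) := by
          funext y
          by_cases hy : y ∈ Set.Icc (0:ℝ) 1
          · rw [Set.indicator_of_mem hy]
            rcases eq_or_lt_of_le hy.1 with h' | h'
            · have hneg : ¬(0 < x ∧ x ≤ 1 ∧ 0 < y ∧ y ≤ 1) := by
                rintro ⟨-, -, h0, -⟩
                rw [← h'] at h0
                exact lt_irrefl 0 h0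
              rw [if_neg hneg, ← h']
              simp [fL]
            · rw [if_pos ⟨h, hx1, h', hy.2⟩]
          · rw [Set.indicator_of_notMem hy, if_neg]
            rintro ⟨-, -, hy0, hy1⟩
            exact hy ⟨le_of_lt hy0, hy1⟩
        rw [hfun, lintegral_indicator measurableSet_Icc,
          ← ofReal_integral_eq_lintegral_ofReal]
        · congr 1
          rw [integral_Icc_eq_integral_Ioc, ← intervalIntegral.integral_of_le zero_le_one]
          exact fL_int_val h hx1
        · exact fL_integrableOn x h hx1
        · refine (ae_restrict_iff' measurableSet_Icc).2
            (Filter.Eventually.of_forall fun y hy => ?_)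
          exact fL_nonneg h hx1 hy.1 hy.2
    · rw [Set.indicator_of_notMem hx]
      have hz : ∀ y : ℝ, (if 0 < x ∧ x ≤ 1 ∧ 0 < y ∧ y ≤ 1 then
          ENNReal.ofReal (fL x y) else 0) = 0 := by
        intro y
        apply if_neg
        rintro ⟨h0, h1, -⟩
        exact hx ⟨le_of_lt h0, h1⟩
      rw [lintegral_congr hz, lintegral_zero]
  simp only [hmid]
  rw [lintegral_indicator measurableSet_Icc, ← ofReal_integral_eq_lintegral_ofReal]
  · have hval : ∫ x in Set.Icc (0:ℝ) 1, -(x * Real.log x) = 1/4 := by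
      rw [integral_Icc_eq_integral_Ioc, ← intervalIntegral.integral_of_le zero_le_one,
        intervalIntegral.integral_neg, xlogx_integral]
      norm_num
    rw [hval, ENNReal.ofReal_div_of_pos (by norm_num), ENNReal.ofReal_one,
      ENNReal.ofReal_ofNat]
  · exact (Real.continuous_mul_log.neg).integrableOn_Icc
  · refine (ae_restrict_iff' measurableSet_Icc).2 (Filter.Eventually.of_forall fun x hx => ?_)
    have h : x * Real.log x ≤ 0 :=
      mul_nonpos_iff.mpr (Or.inl ⟨hx.1, Real.log_nonpos hx.1 hx.2⟩)
    simpa using neg_nonneg.mpr h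

/-- In the first octant, unital one-qubit Lindblad channels fill half of the volume of all
unital CPMs: `vol(L) = 1/4` and `vol(T) = 1/2`. -/
theorem lindblad_volume_first_octant :
    volume {p : ℝ × ℝ × ℝ | 0 < p.1 ∧ p.1 ≤ 1 ∧ 0 < p.2.1 ∧ p.2.1 ≤ 1 ∧
        0 < p.2.2 ∧ p.2.2 ≤ 1 ∧
        p.2.1 * p.2.2 ≤ p.1 ∧ p.1 * p.2.2 ≤ p.2.1 ∧ p.1 * p.2.1 ≤ p.2.2} =
      (1 / 2) * volume {p : ℝ × ℝ × ℝ | 0 ≤ p.1 ∧ 0 ≤ p.2.1 ∧ 0 ≤ p.2.2 ∧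
        p.1 + p.2.1 ≤ 1 + p.2.2 ∧ p.1 + p.2.2 ≤ 1 + p.2.1 ∧ p.2.1 + p.2.2 ≤ 1 + p.1} ∧
    volume {p : ℝ × ℝ × ℝ | 0 < p.1 ∧ p.1 ≤ 1 ∧ 0 < p.2.1 ∧ p.2.1 ≤ 1 ∧
        0 < p.2.2 ∧ p.2.2 ≤ 1 ∧
        p.2.1 * p.2.2 ≤ p.1 ∧ p.1 * p.2.2 ≤ p.2.1 ∧ p.1 * p.2.1 ≤ p.2.2} = 1 / 4 ∧
    volume {p : ℝ × ℝ × ℝ | 0 ≤ p.1 ∧ 0 ≤ p.2.1 ∧ 0 ≤ p.2.2 ∧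
        p.1 + p.2.1 ≤ 1 + p.2.2 ∧ p.1 + p.2.2 ≤ 1 + p.2.1 ∧ p.2.1 + p.2.2 ≤ 1 + p.1} =
      1 / 2 := by
  refine ⟨?_, volL, volT⟩
  rw [volL, volT]
  have h2 : (1:ENNReal)/2 = ENNReal.ofReal (1/2) := by
    rw [ENNReal.ofReal_div_of_pos (by norm_num), ENNReal.ofReal_one, ENNReal.ofReal_ofNat]
  have h4 : (1:ENNReal)/4 = ENNReal.ofReal (1/4) := by
    rw [ENNReal.ofReal_div_of_pos (by norm_num), ENNReal.ofReal_one, ENNReal.ofReal_ofNat]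
  rw [h4, h2, ← ENNReal.ofReal_mul (by norm_num)]
  norm_num
end

section
/- Let S = {λ ∈ ℝ³ : λ1·λ2·λ3 ≥ 0, |λ1| ≤ 1, |λ2| ≤ 1, |λ3| ≤ 1, |λ1| ≥ |λ2|·|λ3|, |λ2| ≥ |λ1|·|λ3|, |λ3| ≥ |λ1|·|λ2|} and let T be the convex hull of the four points (1,1,1), (1,−1,−1), (−1,1,−1), (−1,−1,1) in ℝ³. Then the Lebesgue volume of S equals 3/8 times the Lebesgue volume of T; explicitly, vol(S) = 1 and vol(T) = 8/3. -/
open MeasureTheory Set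

noncomputable section
namespace LV


def P : Set (ℝ × ℝ × ℝ) :=
  {p | 0 ≤ p.1 ∧ 0 ≤ p.2.1 ∧ 0 ≤ p.2.2 ∧ p.1 ≤ 1 ∧ p.2.1 ≤ 1 ∧ p.2.2 ≤ 1 ∧
    p.2.1 * p.2.2 ≤ p.1 ∧ p.1 * p.2.2 ≤ p.2.1 ∧ p.1 * p.2.1 ≤ p.2.2}

def P1 : Set (ℝ × ℝ × ℝ) := P ∩ {p | p.2.1 ≤ p.1}

lemma slice_P1_eq {x y : ℝ} (hx : 0 < x) (hx1 : x ≤ 1) (hy : 0 ≤ y) (hyx : y ≤ x) :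
    {z : ℝ | (x, y, z) ∈ P1} = Icc (x * y) (y / x) := by
  ext z
  simp only [P1, P, mem_inter_iff, mem_setOf_eq, mem_Icc]
  constructor
  · rintro ⟨⟨_, _, _, _, _, _, _, h8, h9⟩, _⟩
    exact ⟨h9, (le_div_iff₀ hx).2 (by linarith [mul_comm x z])⟩
  · rintro ⟨hz1, hz2⟩
    have hzx : z * x ≤ y := (le_div_iff₀ hx).1 hz2
    have hz0 : 0 ≤ z := le_trans (mul_nonneg hx.le hy) hz1
    have hdx : y / x ≤ 1 := (div_le_one hx).2 hyx
    refine ⟨⟨hx.le, hy, hz0, hx1, le_trans hyx hx1, by linarith, ?_, by linarith [mul_comm z x], hz1⟩, hyx⟩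
    nlinarith [mul_le_mul_of_nonneg_left hzx hy, mul_self_le_mul_self hy hyx]

lemma innerP1 {x : ℝ} (hx : 0 < x) (hx1 : x ≤ 1) :
    (∫⁻ y : ℝ, volume {z : ℝ | (x, y, z) ∈ P1}) = ENNReal.ofReal (x/2 - x^3/2) := by
  have h1 : ∀ y : ℝ, volume {z : ℝ | (x, y, z) ∈ P1}
      = Set.indicator (Icc 0 x) (fun y => ENNReal.ofReal (y/x - x*y)) y := by
    intro y
    by_cases hy : y ∈ Icc (0:ℝ) x
    · rw [indicator_of_mem hy, slice_P1_eq hx hx1 hy.1 hy.2, Real.volume_Icc]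
    · rw [indicator_of_notMem hy]
      have he : {z : ℝ | (x, y, z) ∈ P1} = ∅ := by
        ext z
        simp only [mem_setOf_eq, P1, P, mem_inter_iff, mem_empty_iff_false, iff_false, not_and]
        rintro ⟨_, hy0, _⟩ hyx
        exact hy ⟨hy0, hyx⟩
      simp [he]
  rw [lintegral_congr h1, lintegral_indicator measurableSet_Icc,
    ← ofReal_integral_eq_lintegral_ofReal]
  · congr 1
    rw [integral_Icc_eq_integral_Ioc, ← intervalIntegral.integral_of_le hx.le]
    have he : ∀ y : ℝ, y/x - x*y = (x⁻¹ - x) * y := by intro y; field_simp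
    simp_rw [he]
    rw [intervalIntegral.integral_const_mul, integral_id]
    field_simp
    ring
  · exact Continuous.integrableOn_Icc (by fun_prop (disch := positivity))
  · refine (ae_restrict_iff' measurableSet_Icc).2 (ae_of_all _ fun y hy => ?_)
    have hx2 : y * (x*x) ≤ y * 1 := mul_le_mul_of_nonneg_left (by nlinarith) hy.1
    have : x*y ≤ y/x := (le_div_iff₀ hx).2 (by nlinarith)
    show (0:ℝ) ≤ y / x - x * y
    linarith

lemma vol3 (A : Set (ℝ × ℝ × ℝ)) (hA : MeasurableSet A) :
    volume A = ∫⁻ x : ℝ, ∫⁻ y : ℝ, volume {z : ℝ | (x, y, z) ∈ A} := by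
  rw [MeasureTheory.Measure.volume_eq_prod, Measure.prod_apply hA]
  refine lintegral_congr fun x => ?_
  rw [MeasureTheory.Measure.volume_eq_prod,
    Measure.prod_apply (hA.preimage measurable_prodMk_left)]
  rfl

lemma measP : MeasurableSet P := by
  unfold P; simp only [Set.setOf_and]
  repeat' apply MeasurableSet.inter
  all_goals apply measurableSet_le <;> fun_prop

lemma measP1 : MeasurableSet P1 :=
  measP.inter (measurableSet_le (measurable_fst.comp measurable_snd) measurable_fst)

lemma ae_ne_zero : ∀ᵐ y : ℝ, y ≠ 0 := by
  rw [ae_iff]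
  simp only [ne_eq, not_not, Set.setOf_eq_eq_singleton]
  exact Real.volume_singleton

lemma volP1 : volume P1 = ENNReal.ofReal (1/8) := by
  rw [vol3 P1 measP1]
  have h1 : ∀ x : ℝ, (∫⁻ y : ℝ, volume {z : ℝ | (x, y, z) ∈ P1})
      = Set.indicator (Ioc (0:ℝ) 1) (fun x => ENNReal.ofReal (x/2 - x^3/2)) x := by
    intro x
    by_cases hx : x ∈ Ioc (0:ℝ) 1
    · rw [indicator_of_mem hx, innerP1 hx.1 hx.2]
    · rw [indicator_of_notMem hx]
      rcases eq_or_ne x 0 with rfl | hx0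
      · rw [lintegral_congr_ae (ae_ne_zero.mono fun y hy => ?_), lintegral_zero]
        have he : {z : ℝ | ((0:ℝ), y, z) ∈ P1} = ∅ := by
          ext z
          simp only [mem_setOf_eq, P1, P, mem_inter_iff, mem_empty_iff_false, iff_false, not_and]
          rintro ⟨_, hy0, _⟩ hyx
          exact hy (le_antisymm hyx hy0)
        simp [he]
      · have he : ∀ y : ℝ, {z : ℝ | (x, y, z) ∈ P1} = ∅ := by
          intro y; ext z
          simp only [mem_setOf_eq, P1, P, mem_inter_iff, mem_empty_iff_false, iff_false, not_and]
          rintro ⟨hx0', -, -, hx1', -⟩ -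
          exact hx ⟨lt_of_le_of_ne hx0' (Ne.symm hx0), hx1'⟩
        simp [he]
  rw [lintegral_congr h1, lintegral_indicator measurableSet_Ioc,
    ← ofReal_integral_eq_lintegral_ofReal]
  · rw [← intervalIntegral.integral_of_le zero_le_one]
    rw [intervalIntegral.integral_sub ((continuous_id'.div_const 2).intervalIntegrable 0 1)
      (((continuous_pow 3).div_const 2).intervalIntegrable 0 1)]
    rw [intervalIntegral.integral_div, intervalIntegral.integral_div, integral_id, integral_pow]
    norm_num
  · exact Continuous.integrableOn_Ioc (by fun_prop)
  · refine (ae_restrict_iff' measurableSet_Ioc).2 (ae_of_all _ fun y hy => ?_)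
    show (0:ℝ) ≤ y/2 - y^3/2
    nlinarith [hy.1, hy.2, mul_le_mul_of_nonneg_left (show y^2 ≤ 1 by nlinarith [hy.1, hy.2]) hy.1.le]


def sw : ℝ × ℝ × ℝ → ℝ × ℝ × ℝ :=
  (MeasurableEquiv.prodAssoc : (ℝ×ℝ)×ℝ ≃ᵐ ℝ×(ℝ×ℝ)) ∘ (Prod.map Prod.swap id) ∘
    ((MeasurableEquiv.prodAssoc : (ℝ×ℝ)×ℝ ≃ᵐ ℝ×(ℝ×ℝ)).symm)

example (p : ℝ × ℝ × ℝ) : sw p = (p.2.1, p.1, p.2.2) := rfl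

lemma mp_sw : MeasurePreserving sw volume volume := by
  have h0 : MeasurePreserving (Prod.swap : ℝ×ℝ → ℝ×ℝ) volume volume := by
    rw [MeasureTheory.Measure.volume_eq_prod]
    exact Measure.measurePreserving_swap
  have h1 : MeasurePreserving (Prod.map (Prod.swap : ℝ×ℝ → ℝ×ℝ) (id : ℝ → ℝ))
      volume volume := by
    rw [MeasureTheory.Measure.volume_eq_prod]
    exact h0.prod (MeasurePreserving.id _)
  exact volume_preserving_prodAssoc.comp
    (h1.comp (MeasurePreserving.symm _ volume_preserving_prodAssoc))

lemma mp_negneg : MeasurePreserving (Prod.map (Neg.neg : ℝ→ℝ) (Neg.neg : ℝ→ℝ))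
    volume volume := by
  rw [MeasureTheory.Measure.volume_eq_prod]
  exact (Measure.measurePreserving_neg _).prod (Measure.measurePreserving_neg _)

lemma mp_idneg : MeasurePreserving (Prod.map (id : ℝ→ℝ) (Neg.neg : ℝ→ℝ))
    volume volume := by
  rw [MeasureTheory.Measure.volume_eq_prod]
  exact (MeasurePreserving.id _).prod (Measure.measurePreserving_neg _)

lemma mp_negid : MeasurePreserving (Prod.map (Neg.neg : ℝ→ℝ) (id : ℝ→ℝ))
    volume volume := by
  rw [MeasureTheory.Measure.volume_eq_prod]
  exact (Measure.measurePreserving_neg _).prod (MeasurePreserving.id _)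

def m2 : ℝ × ℝ × ℝ → ℝ × ℝ × ℝ := Prod.map (id : ℝ→ℝ) (Prod.map (Neg.neg : ℝ→ℝ) Neg.neg)
def m3 : ℝ × ℝ × ℝ → ℝ × ℝ × ℝ := Prod.map (Neg.neg : ℝ→ℝ) (Prod.map (id : ℝ→ℝ) Neg.neg)
def m4 : ℝ × ℝ × ℝ → ℝ × ℝ × ℝ := Prod.map (Neg.neg : ℝ→ℝ) (Prod.map (Neg.neg : ℝ→ℝ) id)

example (p : ℝ × ℝ × ℝ) : m2 p = (p.1, -p.2.1, -p.2.2) := rfl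

lemma mp_m2 : MeasurePreserving m2 volume volume := by
  rw [MeasureTheory.Measure.volume_eq_prod]
  exact (MeasurePreserving.id _).prod mp_negneg

lemma mp_m3 : MeasurePreserving m3 volume volume := by
  rw [MeasureTheory.Measure.volume_eq_prod]
  exact (Measure.measurePreserving_neg _).prod mp_idneg

lemma mp_m4 : MeasurePreserving m4 volume volume := by
  rw [MeasureTheory.Measure.volume_eq_prod]
  exact (Measure.measurePreserving_neg _).prod mp_negid



def Aabs : Set (ℝ × ℝ × ℝ) :=
  {p | |p.1| ≤ 1 ∧ |p.2.1| ≤ 1 ∧ |p.2.2| ≤ 1 ∧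
    |p.2.1| * |p.2.2| ≤ |p.1| ∧ |p.1| * |p.2.2| ≤ |p.2.1| ∧ |p.1| * |p.2.1| ≤ |p.2.2|}

def R1 : Set (ℝ × ℝ × ℝ) := {p | 0 ≤ p.1 ∧ 0 ≤ p.2.1 ∧ 0 ≤ p.2.2} ∩ Aabs
def R2 : Set (ℝ × ℝ × ℝ) := {p | 0 ≤ p.1 ∧ p.2.1 ≤ 0 ∧ p.2.2 ≤ 0} ∩ Aabs
def R3 : Set (ℝ × ℝ × ℝ) := {p | p.1 ≤ 0 ∧ 0 ≤ p.2.1 ∧ p.2.2 ≤ 0} ∩ Aabs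
def R4 : Set (ℝ × ℝ × ℝ) := {p | p.1 ≤ 0 ∧ p.2.1 ≤ 0 ∧ 0 ≤ p.2.2} ∩ Aabs

lemma sign_cases {x y z : ℝ} (h : 0 ≤ x * y * z) :
    (0 ≤ x ∧ 0 ≤ y ∧ 0 ≤ z) ∨ (0 ≤ x ∧ y ≤ 0 ∧ z ≤ 0) ∨
    (x ≤ 0 ∧ 0 ≤ y ∧ z ≤ 0) ∨ (x ≤ 0 ∧ y ≤ 0 ∧ 0 ≤ z) := by
  rcases le_total 0 x with hx | hx <;> rcases le_total 0 y with hy | hy <;>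
    rcases le_total 0 z with hz | hz
  · exact Or.inl ⟨hx, hy, hz⟩
  · -- (+,+,-)
    have h0 : x * y * z = 0 := le_antisymm (by nlinarith [mul_nonneg hx hy]) h
    rcases mul_eq_zero.1 h0 with h1 | h1
    · rcases mul_eq_zero.1 h1 with h2 | h2
      · exact Or.inr (Or.inr (Or.inl ⟨h2.le, hy, hz⟩))
      · exact Or.inr (Or.inl ⟨hx, h2.le, hz⟩)
    · exact Or.inl ⟨hx, hy, h1.ge⟩
  · -- (+,-,+)
    have h0 : x * y * z = 0 := le_antisymm (by nlinarith [mul_nonneg hx hz]) h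
    rcases mul_eq_zero.1 h0 with h1 | h1
    · rcases mul_eq_zero.1 h1 with h2 | h2
      · exact Or.inr (Or.inr (Or.inr ⟨h2.le, hy, hz⟩))
      · exact Or.inl ⟨hx, h2.ge, hz⟩
    · exact Or.inr (Or.inl ⟨hx, hy, h1.le⟩)
  · exact Or.inr (Or.inl ⟨hx, hy, hz⟩)
  · -- (-,+,+)
    have h0 : x * y * z = 0 := le_antisymm (by nlinarith [mul_nonneg hy hz]) h
    rcases mul_eq_zero.1 h0 with h1 | h1
    · rcases mul_eq_zero.1 h1 with h2 | h2
      · exact Or.inl ⟨h2.ge, hy, hz⟩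
      · exact Or.inr (Or.inr (Or.inr ⟨hx, h2.le, hz⟩))
    · exact Or.inr (Or.inr (Or.inl ⟨hx, hy, h1.le⟩))
  · exact Or.inr (Or.inr (Or.inl ⟨hx, hy, hz⟩))
  · exact Or.inr (Or.inr (Or.inr ⟨hx, hy, hz⟩))
  · -- (-,-,-)
    have h0 : x * y * z = 0 :=
      le_antisymm (by nlinarith [mul_nonneg (neg_nonneg.2 hx) (neg_nonneg.2 hy)]) h
    rcases mul_eq_zero.1 h0 with h1 | h1
    · rcases mul_eq_zero.1 h1 with h2 | h2
      · exact Or.inr (Or.inl ⟨h2.ge, hy, hz⟩)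
      · exact Or.inr (Or.inr (Or.inl ⟨hx, h2.ge, hz⟩))
    · exact Or.inr (Or.inr (Or.inr ⟨hx, hy, h1.ge⟩))

lemma S_eq :
    {p : ℝ × ℝ × ℝ | 0 ≤ p.1 * p.2.1 * p.2.2 ∧
        |p.1| ≤ 1 ∧ |p.2.1| ≤ 1 ∧ |p.2.2| ≤ 1 ∧
        |p.2.1| * |p.2.2| ≤ |p.1| ∧ |p.1| * |p.2.2| ≤ |p.2.1| ∧ |p.1| * |p.2.1| ≤ |p.2.2|}
      = R1 ∪ (R2 ∪ (R3 ∪ R4)) := by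
  ext p
  simp only [mem_setOf_eq, mem_union, R1, R2, R3, R4, Aabs, mem_inter_iff]
  constructor
  · rintro ⟨hp, h⟩
    rcases sign_cases hp with hs | hs | hs | hs
    · exact Or.inl ⟨hs, h⟩
    · exact Or.inr (Or.inl ⟨hs, h⟩)
    · exact Or.inr (Or.inr (Or.inl ⟨hs, h⟩))
    · exact Or.inr (Or.inr (Or.inr ⟨hs, h⟩))
  · rintro (⟨⟨hx, hy, hz⟩, h⟩ | ⟨⟨hx, hy, hz⟩, h⟩ | ⟨⟨hx, hy, hz⟩, h⟩ | ⟨⟨hx, hy, hz⟩, h⟩) <;>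
      refine ⟨?_, h⟩
    · exact mul_nonneg (mul_nonneg hx hy) hz
    · nlinarith [mul_nonneg hx (mul_nonneg (neg_nonneg.2 hy) (neg_nonneg.2 hz))]
    · nlinarith [mul_nonneg (mul_nonneg (neg_nonneg.2 hx) hy) (neg_nonneg.2 hz)]
    · nlinarith [mul_nonneg (mul_nonneg (neg_nonneg.2 hx) (neg_nonneg.2 hy)) hz]


lemma R1_eq : R1 = P := by
  ext p
  simp only [R1, P, Aabs, mem_inter_iff, mem_setOf_eq]
  constructor
  · rintro ⟨⟨hx, hy, hz⟩, h2, h3, h4, h5, h6, h7⟩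
    simp only [abs_of_nonneg hx, abs_of_nonneg hy, abs_of_nonneg hz] at h2 h3 h4 h5 h6 h7
    exact ⟨hx, hy, hz, h2, h3, h4, h5, h6, h7⟩
  · rintro ⟨hx, hy, hz, h2, h3, h4, h5, h6, h7⟩
    refine ⟨⟨hx, hy, hz⟩, ?_⟩
    rw [abs_of_nonneg hx, abs_of_nonneg hy, abs_of_nonneg hz]
    exact ⟨h2, h3, h4, h5, h6, h7⟩

lemma R2_eq : R2 = m2 ⁻¹' P := by
  ext p
  rw [mem_preimage, show m2 p = (p.1, -p.2.1, -p.2.2) from rfl]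
  simp only [R2, P, Aabs, mem_inter_iff, mem_setOf_eq]
  constructor
  · rintro ⟨⟨hx, hy, hz⟩, h2, h3, h4, h5, h6, h7⟩
    simp only [abs_of_nonneg hx, abs_of_nonpos hy, abs_of_nonpos hz] at h2 h3 h4 h5 h6 h7
    exact ⟨hx, neg_nonneg.2 hy, neg_nonneg.2 hz, h2, h3, h4, h5, h6, h7⟩
  · rintro ⟨hx, hy, hz, h2, h3, h4, h5, h6, h7⟩
    have hy' : p.2.1 ≤ 0 := by linarith [neg_nonneg.1 hy]
    have hz' : p.2.2 ≤ 0 := by linarith [neg_nonneg.1 hz]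
    refine ⟨⟨hx, hy', hz'⟩, ?_⟩
    rw [abs_of_nonneg hx, abs_of_nonpos hy', abs_of_nonpos hz']
    exact ⟨h2, h3, h4, h5, h6, h7⟩

lemma R3_eq : R3 = m3 ⁻¹' P := by
  ext p
  rw [mem_preimage, show m3 p = (-p.1, p.2.1, -p.2.2) from rfl]
  simp only [R3, P, Aabs, mem_inter_iff, mem_setOf_eq]
  constructor
  · rintro ⟨⟨hx, hy, hz⟩, h2, h3, h4, h5, h6, h7⟩
    simp only [abs_of_nonpos hx, abs_of_nonneg hy, abs_of_nonpos hz] at h2 h3 h4 h5 h6 h7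
    exact ⟨neg_nonneg.2 hx, hy, neg_nonneg.2 hz, h2, h3, h4, h5, h6, h7⟩
  · rintro ⟨hx, hy, hz, h2, h3, h4, h5, h6, h7⟩
    have hx' : p.1 ≤ 0 := by linarith [neg_nonneg.1 hx]
    have hz' : p.2.2 ≤ 0 := by linarith [neg_nonneg.1 hz]
    refine ⟨⟨hx', hy, hz'⟩, ?_⟩
    rw [abs_of_nonpos hx', abs_of_nonneg hy, abs_of_nonpos hz']
    exact ⟨h2, h3, h4, h5, h6, h7⟩

lemma R4_eq : R4 = m4 ⁻¹' P := by
  ext p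
  rw [mem_preimage, show m4 p = (-p.1, -p.2.1, p.2.2) from rfl]
  simp only [R4, P, Aabs, mem_inter_iff, mem_setOf_eq]
  constructor
  · rintro ⟨⟨hx, hy, hz⟩, h2, h3, h4, h5, h6, h7⟩
    simp only [abs_of_nonpos hx, abs_of_nonpos hy, abs_of_nonneg hz] at h2 h3 h4 h5 h6 h7
    exact ⟨neg_nonneg.2 hx, neg_nonneg.2 hy, hz, h2, h3, h4, h5, h6, h7⟩
  · rintro ⟨hx, hy, hz, h2, h3, h4, h5, h6, h7⟩
    have hx' : p.1 ≤ 0 := by linarith [neg_nonneg.1 hx]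
    have hy' : p.2.1 ≤ 0 := by linarith [neg_nonneg.1 hy]
    refine ⟨⟨hx', hy', hz⟩, ?_⟩
    rw [abs_of_nonpos hx', abs_of_nonpos hy', abs_of_nonneg hz]
    exact ⟨h2, h3, h4, h5, h6, h7⟩

lemma nullX : volume {p : ℝ × ℝ × ℝ | p.1 = 0} = 0 := by
  have h : {p : ℝ × ℝ × ℝ | p.1 = 0} = ({0} : Set ℝ) ×ˢ (univ : Set (ℝ × ℝ)) := by
    ext p; simp only [Set.mem_prod, Set.mem_singleton_iff, Set.mem_univ, and_true, true_and, mem_setOf_eq]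
  rw [h, MeasureTheory.Measure.volume_eq_prod, Measure.prod_prod]
  simp

lemma nullY : volume {p : ℝ × ℝ × ℝ | p.2.1 = 0} = 0 := by
  have h : {p : ℝ × ℝ × ℝ | p.2.1 = 0}
      = (univ : Set ℝ) ×ˢ (({0} : Set ℝ) ×ˢ (univ : Set ℝ)) := by
    ext p; simp only [Set.mem_prod, Set.mem_singleton_iff, Set.mem_univ, and_true, true_and, mem_setOf_eq]
  rw [h, MeasureTheory.Measure.volume_eq_prod, Measure.prod_prod,
    MeasureTheory.Measure.volume_eq_prod, Measure.prod_prod]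
  simp

lemma nullZ : volume {p : ℝ × ℝ × ℝ | p.2.2 = 0} = 0 := by
  have h : {p : ℝ × ℝ × ℝ | p.2.2 = 0}
      = (univ : Set ℝ) ×ˢ ((univ : Set ℝ) ×ˢ ({0} : Set ℝ)) := by
    ext p; simp only [Set.mem_prod, Set.mem_singleton_iff, Set.mem_univ, and_true, true_and, mem_setOf_eq]
  rw [h, MeasureTheory.Measure.volume_eq_prod, Measure.prod_prod,
    MeasureTheory.Measure.volume_eq_prod, Measure.prod_prod]
  simp

lemma nullDiag : volume {p : ℝ × ℝ × ℝ | p.1 = p.2.1} = 0 := by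
  have hm : MeasurableSet {p : ℝ × ℝ × ℝ | p.1 = p.2.1} :=
    measurableSet_eq_fun measurable_fst (measurable_fst.comp measurable_snd)
  have h : ∀ x : ℝ, volume (Prod.mk x ⁻¹' {p : ℝ × ℝ × ℝ | p.1 = p.2.1}) = 0 := by
    intro x
    have he : Prod.mk x ⁻¹' {p : ℝ × ℝ × ℝ | p.1 = p.2.1}
        = ({x} : Set ℝ) ×ˢ (univ : Set ℝ) := by
      ext q; simp only [Set.mem_prod, Set.mem_singleton_iff, Set.mem_univ, and_true, mem_preimage, mem_setOf_eq, eq_comm]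
    rw [he, MeasureTheory.Measure.volume_eq_prod, Measure.prod_prod]
    simp
  rw [MeasureTheory.Measure.volume_eq_prod, Measure.prod_apply hm, lintegral_congr h,
    lintegral_zero]


def P2 : Set (ℝ × ℝ × ℝ) := P ∩ {p | p.1 ≤ p.2.1}

lemma measP2 : MeasurableSet P2 :=
  measP.inter (measurableSet_le measurable_fst (measurable_fst.comp measurable_snd))

lemma sw_pre : sw ⁻¹' P1 = P2 := by
  ext p
  rw [mem_preimage, show sw p = (p.2.1, p.1, p.2.2) from rfl]
  simp only [P1, P2, P, mem_inter_iff, mem_setOf_eq]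
  constructor
  · rintro ⟨⟨h1, h2, h3, h4, h5, h6, h7, h8, h9⟩, h10⟩
    exact ⟨⟨h2, h1, h3, h5, h4, h6, h8, h7, by rwa [mul_comm] at h9⟩, h10⟩
  · rintro ⟨⟨h1, h2, h3, h4, h5, h6, h7, h8, h9⟩, h10⟩
    exact ⟨⟨h2, h1, h3, h5, h4, h6, h8, h7, by rwa [mul_comm] at h9⟩, h10⟩

lemma volP2 : volume P2 = ENNReal.ofReal (1/8) := by
  rw [← sw_pre, mp_sw.measure_preimage measP1.nullMeasurableSet, volP1]

lemma P_eq : P = P1 ∪ P2 := by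
  have h : ({p : ℝ × ℝ × ℝ | p.2.1 ≤ p.1} ∪ {p | p.1 ≤ p.2.1}) = univ := by
    ext p; simp [le_total]
  rw [P1, P2, ← Set.inter_union_distrib_left, h, Set.inter_univ]

lemma volP : volume P = ENNReal.ofReal (1/4) := by
  have hd : AEDisjoint volume P1 P2 :=
    measure_mono_null (fun p hp => (le_antisymm hp.2.2 hp.1.2 : p.1 = p.2.1)) nullDiag
  rw [P_eq, measure_union₀ measP2.nullMeasurableSet hd, volP1, volP2,
    ← ENNReal.ofReal_add (by norm_num) (by norm_num)]
  norm_num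

lemma measR1 : MeasurableSet R1 := R1_eq ▸ measP
lemma measR2 : MeasurableSet R2 := R2_eq ▸ (measP.preimage mp_m2.measurable)
lemma measR3 : MeasurableSet R3 := R3_eq ▸ (measP.preimage mp_m3.measurable)
lemma measR4 : MeasurableSet R4 := R4_eq ▸ (measP.preimage mp_m4.measurable)

lemma volR1 : volume R1 = ENNReal.ofReal (1/4) := by rw [R1_eq, volP]
lemma volR2 : volume R2 = ENNReal.ofReal (1/4) := by
  rw [R2_eq, mp_m2.measure_preimage measP.nullMeasurableSet, volP]
lemma volR3 : volume R3 = ENNReal.ofReal (1/4) := by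
  rw [R3_eq, mp_m3.measure_preimage measP.nullMeasurableSet, volP]
lemma volR4 : volume R4 = ENNReal.ofReal (1/4) := by
  rw [R4_eq, mp_m4.measure_preimage measP.nullMeasurableSet, volP]

lemma volS : volume {p : ℝ × ℝ × ℝ | 0 ≤ p.1 * p.2.1 * p.2.2 ∧
    |p.1| ≤ 1 ∧ |p.2.1| ≤ 1 ∧ |p.2.2| ≤ 1 ∧
    |p.2.1| * |p.2.2| ≤ |p.1| ∧ |p.1| * |p.2.2| ≤ |p.2.1| ∧ |p.1| * |p.2.1| ≤ |p.2.2|} = 1 := by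
  have d12 : AEDisjoint volume R1 R2 :=
    measure_mono_null (fun p hp => (le_antisymm hp.2.1.2.1 hp.1.1.2.1 : p.2.1 = 0)) nullY
  have d13 : AEDisjoint volume R1 R3 :=
    measure_mono_null (fun p hp => (le_antisymm hp.2.1.1 hp.1.1.1 : p.1 = 0)) nullX
  have d14 : AEDisjoint volume R1 R4 :=
    measure_mono_null (fun p hp => (le_antisymm hp.2.1.1 hp.1.1.1 : p.1 = 0)) nullX
  have d23 : AEDisjoint volume R2 R3 :=
    measure_mono_null (fun p hp => (le_antisymm hp.2.1.1 hp.1.1.1 : p.1 = 0)) nullX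
  have d24 : AEDisjoint volume R2 R4 :=
    measure_mono_null (fun p hp => (le_antisymm hp.2.1.1 hp.1.1.1 : p.1 = 0)) nullX
  have d34 : AEDisjoint volume R3 R4 :=
    measure_mono_null (fun p hp => (le_antisymm hp.1.1.2.2 hp.2.1.2.2 : p.2.2 = 0)) nullZ
  rw [S_eq,
    measure_union₀ (measR2.union (measR3.union measR4)).nullMeasurableSet
      (d12.union_right (d13.union_right d14)),
    measure_union₀ (measR3.union measR4).nullMeasurableSet (d23.union_right d24),
    measure_union₀ measR4.nullMeasurableSet d34,
    volR1, volR2, volR3, volR4,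
    ← ENNReal.ofReal_add (by norm_num) (by norm_num),
    ← ENNReal.ofReal_add (by norm_num) (by norm_num),
    ← ENNReal.ofReal_add (by norm_num) (by norm_num)]
  norm_num

def Cube : Set (ℝ × ℝ × ℝ) :=
  {p | -1 ≤ p.1 ∧ p.1 ≤ 1 ∧ -1 ≤ p.2.1 ∧ p.2.1 ≤ 1 ∧ -1 ≤ p.2.2 ∧ p.2.2 ≤ 1}

def C1 : Set (ℝ × ℝ × ℝ) := Cube ∩ {p | 1 < p.1 + p.2.1 - p.2.2}
def C2 : Set (ℝ × ℝ × ℝ) := Cube ∩ {p | 1 < p.1 - p.2.1 + p.2.2}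
def C3 : Set (ℝ × ℝ × ℝ) := Cube ∩ {p | 1 < -p.1 + p.2.1 + p.2.2}
def C4 : Set (ℝ × ℝ × ℝ) := Cube ∩ {p | 1 < -p.1 - p.2.1 - p.2.2}

lemma measCube : MeasurableSet Cube := by
  unfold Cube; simp only [Set.setOf_and]
  repeat' apply MeasurableSet.inter
  all_goals apply measurableSet_le <;> fun_prop

lemma measC1 : MeasurableSet C1 :=
  measCube.inter (measurableSet_lt measurable_const (by fun_prop))
lemma measC2 : MeasurableSet C2 :=
  measCube.inter (measurableSet_lt measurable_const (by fun_prop))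
lemma measC3 : MeasurableSet C3 :=
  measCube.inter (measurableSet_lt measurable_const (by fun_prop))
lemma measC4 : MeasurableSet C4 :=
  measCube.inter (measurableSet_lt measurable_const (by fun_prop))

lemma volCube : volume Cube = 8 := by
  have h : Cube = (Icc (-1:ℝ) 1) ×ˢ ((Icc (-1:ℝ) 1) ×ˢ (Icc (-1:ℝ) 1)) := by
    ext p
    simp only [Cube, mem_setOf_eq, Set.mem_prod, mem_Icc]
    tauto
  rw [h, MeasureTheory.Measure.volume_eq_prod, Measure.prod_prod,
    MeasureTheory.Measure.volume_eq_prod, Measure.prod_prod, Real.volume_Icc]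
  rw [show (1:ℝ) - -1 = 2 by norm_num, ← ENNReal.ofReal_mul (by norm_num),
    ← ENNReal.ofReal_mul (by norm_num)]
  norm_num

lemma slice_C1 {x y : ℝ} (hx : x ∈ Icc (-1:ℝ) 1) (hy : y ∈ Icc (-1:ℝ) 1) :
    {z : ℝ | (x, y, z) ∈ C1} = Ico (-1) (x + y - 1) := by
  ext z
  simp only [C1, Cube, mem_inter_iff, mem_setOf_eq, mem_Ico]
  constructor
  · rintro ⟨⟨_, _, _, _, hz1, _⟩, hlt⟩
    exact ⟨hz1, by linarith⟩
  · rintro ⟨hz1, hz2⟩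
    exact ⟨⟨hx.1, hx.2, hy.1, hy.2, hz1, by linarith [hx.2, hy.2]⟩, by linarith⟩

lemma innerC1 {x : ℝ} (hx : x ∈ Icc (-1:ℝ) 1) :
    (∫⁻ y : ℝ, volume {z : ℝ | (x, y, z) ∈ C1}) = ENNReal.ofReal (x^2/2 + x + 1/2) := by
  have h1 : ∀ y : ℝ, volume {z : ℝ | (x, y, z) ∈ C1}
      = Set.indicator (Icc (-1:ℝ) 1) (fun y => ENNReal.ofReal (x + y)) y := by
    intro y
    by_cases hy : y ∈ Icc (-1:ℝ) 1
    · rw [indicator_of_mem hy, slice_C1 hx hy, Real.volume_Ico]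
      congr 1; ring
    · rw [indicator_of_notMem hy]
      have he : {z : ℝ | (x, y, z) ∈ C1} = ∅ := by
        ext z
        simp only [C1, Cube, mem_inter_iff, mem_setOf_eq, mem_empty_iff_false, iff_false, not_and]
        intro h
        exact absurd ⟨h.2.2.1, h.2.2.2.1⟩ hy
      simp [he]
  rw [lintegral_congr h1, lintegral_indicator measurableSet_Icc]
  have hsplit : Icc (-1:ℝ) 1 = Icc (-1) (-x) ∪ Ioc (-x) 1 :=
    (Icc_union_Ioc_eq_Icc (by linarith [hx.2]) (by linarith [hx.1])).symm
  have hd : Disjoint (Icc (-1:ℝ) (-x)) (Ioc (-x) 1) :=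
    Set.disjoint_left.2 fun a ha ha' => absurd ha.2 (not_le.2 ha'.1)
  rw [hsplit, lintegral_union measurableSet_Ioc hd]
  have hz : (∫⁻ y in Icc (-1:ℝ) (-x), ENNReal.ofReal (x + y)) = 0 := by
    rw [setLIntegral_congr_fun measurableSet_Icc
      (fun y (hy : y ∈ Icc (-1:ℝ) (-x)) =>
        ENNReal.ofReal_eq_zero.2 (by linarith [hy.2]))]
    simp
  rw [hz, zero_add, ← ofReal_integral_eq_lintegral_ofReal]
  · rw [← intervalIntegral.integral_of_le (by linarith [hx.1] : (-x:ℝ) ≤ 1)]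
    rw [intervalIntegral.integral_add (intervalIntegrable_const) intervalIntegral.intervalIntegrable_id,
      intervalIntegral.integral_const, integral_id]
    congr 1
    simp only [smul_eq_mul]
    ring
  · exact Continuous.integrableOn_Ioc (by fun_prop)
  · refine (ae_restrict_iff' measurableSet_Ioc).2 (ae_of_all _ fun y hy => ?_)
    show (0:ℝ) ≤ x + y
    linarith [hy.1]

lemma volC1 : volume C1 = ENNReal.ofReal (4/3) := by
  rw [vol3 C1 measC1]
  have h1 : ∀ x : ℝ, (∫⁻ y : ℝ, volume {z : ℝ | (x, y, z) ∈ C1})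
      = Set.indicator (Icc (-1:ℝ) 1) (fun x => ENNReal.ofReal (x^2/2 + x + 1/2)) x := by
    intro x
    by_cases hx : x ∈ Icc (-1:ℝ) 1
    · rw [indicator_of_mem hx, innerC1 hx]
    · rw [indicator_of_notMem hx]
      have he : ∀ y, {z : ℝ | (x, y, z) ∈ C1} = ∅ := fun y => by
        ext z
        simp only [C1, Cube, mem_inter_iff, mem_setOf_eq, mem_empty_iff_false, iff_false, not_and]
        intro h
        exact absurd ⟨h.1, h.2.1⟩ hx
      simp [he]
  rw [lintegral_congr h1, lintegral_indicator measurableSet_Icc,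
    ← ofReal_integral_eq_lintegral_ofReal]
  · rw [integral_Icc_eq_integral_Ioc, ← intervalIntegral.integral_of_le (by norm_num : (-1:ℝ) ≤ 1)]
    rw [intervalIntegral.integral_add
        (show IntervalIntegrable (fun x : ℝ => x^2/2 + x) volume (-1) 1 from
          (((continuous_pow 2).div_const 2).add continuous_id').intervalIntegrable _ _)
        intervalIntegrable_const,
      intervalIntegral.integral_add
        (((continuous_pow 2).div_const 2).intervalIntegrable _ _)
        intervalIntegral.intervalIntegrable_id,
      intervalIntegral.integral_div, integral_pow, integral_id, intervalIntegral.integral_const]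
    norm_num
  · exact Continuous.integrableOn_Icc (by fun_prop)
  · refine (ae_restrict_iff' measurableSet_Icc).2 (ae_of_all _ fun x _ => ?_)
    show (0:ℝ) ≤ x^2/2 + x + 1/2
    nlinarith [sq_nonneg (x+1)]


lemma C2_eq : m2 ⁻¹' C1 = C2 := by
  ext p
  rw [mem_preimage, show m2 p = (p.1, -p.2.1, -p.2.2) from rfl]
  simp only [C1, C2, Cube, mem_inter_iff, mem_setOf_eq]
  constructor <;> rintro ⟨⟨a1, a2, a3, a4, a5, a6⟩, b⟩ <;>
    exact ⟨⟨by linarith, by linarith, by linarith, by linarith, by linarith, by linarith⟩,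
      by linarith⟩

lemma C3_eq : m3 ⁻¹' C1 = C3 := by
  ext p
  rw [mem_preimage, show m3 p = (-p.1, p.2.1, -p.2.2) from rfl]
  simp only [C1, C3, Cube, mem_inter_iff, mem_setOf_eq]
  constructor <;> rintro ⟨⟨a1, a2, a3, a4, a5, a6⟩, b⟩ <;>
    exact ⟨⟨by linarith, by linarith, by linarith, by linarith, by linarith, by linarith⟩,
      by linarith⟩

lemma C4_eq : m4 ⁻¹' C1 = C4 := by
  ext p
  rw [mem_preimage, show m4 p = (-p.1, -p.2.1, p.2.2) from rfl]
  simp only [C1, C4, Cube, mem_inter_iff, mem_setOf_eq]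
  constructor <;> rintro ⟨⟨a1, a2, a3, a4, a5, a6⟩, b⟩ <;>
    exact ⟨⟨by linarith, by linarith, by linarith, by linarith, by linarith, by linarith⟩,
      by linarith⟩

lemma volC2 : volume C2 = ENNReal.ofReal (4/3) := by
  rw [← C2_eq, mp_m2.measure_preimage measC1.nullMeasurableSet, volC1]
lemma volC3 : volume C3 = ENNReal.ofReal (4/3) := by
  rw [← C3_eq, mp_m3.measure_preimage measC1.nullMeasurableSet, volC1]
lemma volC4 : volume C4 = ENNReal.ofReal (4/3) := by
  rw [← C4_eq, mp_m4.measure_preimage measC1.nullMeasurableSet, volC1]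

def H : Set (ℝ × ℝ × ℝ) :=
  {p | p.1 + p.2.1 - p.2.2 ≤ 1 ∧ p.1 - p.2.1 + p.2.2 ≤ 1 ∧
       -p.1 + p.2.1 + p.2.2 ≤ 1 ∧ -p.1 - p.2.1 - p.2.2 ≤ 1}

lemma measH : MeasurableSet H := by
  unfold H; simp only [Set.setOf_and]
  repeat' apply MeasurableSet.inter
  all_goals apply measurableSet_le <;> fun_prop

lemma cube_decomp : Cube = H ∪ (C1 ∪ (C2 ∪ (C3 ∪ C4))) := by
  ext p
  constructor
  · intro hp
    by_cases hc1 : 1 < p.1 + p.2.1 - p.2.2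
    · exact Or.inr (Or.inl ⟨hp, hc1⟩)
    by_cases hc2 : 1 < p.1 - p.2.1 + p.2.2
    · exact Or.inr (Or.inr (Or.inl ⟨hp, hc2⟩))
    by_cases hc3 : 1 < -p.1 + p.2.1 + p.2.2
    · exact Or.inr (Or.inr (Or.inr (Or.inl ⟨hp, hc3⟩)))
    by_cases hc4 : 1 < -p.1 - p.2.1 - p.2.2
    · exact Or.inr (Or.inr (Or.inr (Or.inr ⟨hp, hc4⟩)))
    exact Or.inl ⟨le_of_not_gt hc1, le_of_not_gt hc2, le_of_not_gt hc3, le_of_not_gt hc4⟩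
  · rintro (⟨h1, h2, h3, h4⟩ | ⟨hp, -⟩ | ⟨hp, -⟩ | ⟨hp, -⟩ | ⟨hp, -⟩)
    · exact ⟨by linarith, by linarith, by linarith, by linarith, by linarith, by linarith⟩
    all_goals exact hp

lemma volH : volume H = 8 / 3 := by
  have dHC : ∀ q ∈ ({C1, C2, C3, C4} : Set (Set (ℝ×ℝ×ℝ))), True := fun _ _ => trivial
  have d01 : Disjoint H C1 := Set.disjoint_left.2 fun p hp hq => absurd hq.2 (not_lt.2 hp.1)
  have d02 : Disjoint H C2 := Set.disjoint_left.2 fun p hp hq => absurd hq.2 (not_lt.2 hp.2.1)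
  have d03 : Disjoint H C3 := Set.disjoint_left.2 fun p hp hq => absurd hq.2 (not_lt.2 hp.2.2.1)
  have d04 : Disjoint H C4 := Set.disjoint_left.2 fun p hp hq => absurd hq.2 (not_lt.2 hp.2.2.2)
  have hcc : ∀ p : ℝ × ℝ × ℝ, p ∈ C1 → (1:ℝ) < p.1 + p.2.1 - p.2.2 := fun p hp => hp.2
  have hcc2 : ∀ p : ℝ × ℝ × ℝ, p ∈ C2 → (1:ℝ) < p.1 - p.2.1 + p.2.2 := fun p hp => hp.2
  have hcc3 : ∀ p : ℝ × ℝ × ℝ, p ∈ C3 → (1:ℝ) < -p.1 + p.2.1 + p.2.2 := fun p hp => hp.2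
  have hcc4 : ∀ p : ℝ × ℝ × ℝ, p ∈ C4 → (1:ℝ) < -p.1 - p.2.1 - p.2.2 := fun p hp => hp.2
  have d12 : Disjoint C1 C2 := Set.disjoint_left.2 fun p hp hq => by
    have := hp.1.2.1; have := hcc p hp; have := hcc2 p hq; linarith
  have d13 : Disjoint C1 C3 := Set.disjoint_left.2 fun p hp hq => by
    have := hp.1.2.2.2.1; have := hcc p hp; have := hcc3 p hq; linarith
  have d14 : Disjoint C1 C4 := Set.disjoint_left.2 fun p hp hq => by
    have := hp.1.2.2.2.2.1; have := hcc p hp; have := hcc4 p hq; linarith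
  have d23 : Disjoint C2 C3 := Set.disjoint_left.2 fun p hp hq => by
    have := hp.1.2.2.2.2.2; have := hcc2 p hp; have := hcc3 p hq; linarith
  have d24 : Disjoint C2 C4 := Set.disjoint_left.2 fun p hp hq => by
    have := hp.1.2.2.1; have := hcc2 p hp; have := hcc4 p hq; linarith
  have d34 : Disjoint C3 C4 := Set.disjoint_left.2 fun p hp hq => by
    have := hp.1.1; have := hcc3 p hp; have := hcc4 p hq; linarith
  have key : volume Cube
      = volume H + (volume C1 + (volume C2 + (volume C3 + volume C4))) := by
    rw [cube_decomp,
      measure_union (d01.union_right (d02.union_right (d03.union_right d04)))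
        (measC1.union (measC2.union (measC3.union measC4))),
      measure_union (d12.union_right (d13.union_right d14))
        (measC2.union (measC3.union measC4)),
      measure_union (d23.union_right d24) (measC3.union measC4),
      measure_union d34 measC4]
  rw [volCube, volC1, volC2, volC3, volC4] at key
  have h163 : (ENNReal.ofReal (4/3) + (ENNReal.ofReal (4/3)
      + (ENNReal.ofReal (4/3) + ENNReal.ofReal (4/3)))) = ENNReal.ofReal (16/3) := by
    rw [← ENNReal.ofReal_add (by norm_num) (by norm_num),
      ← ENNReal.ofReal_add (by norm_num) (by norm_num),
      ← ENNReal.ofReal_add (by norm_num) (by norm_num)]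
    norm_num
  rw [h163] at key
  have hH : volume H = (8:ENNReal) - ENNReal.ofReal (16/3) :=
    ENNReal.eq_sub_of_add_eq (by simp) key.symm
  rw [hH, (show (8:ENNReal) = ENNReal.ofReal 8 by simp),
    ← ENNReal.ofReal_sub 8 (by norm_num : (0:ℝ) ≤ 16/3),
    (show (8:ℝ) - 16/3 = 8/3 by norm_num),
    ENNReal.ofReal_div_of_pos (by norm_num)]
  simp


lemma hull_eq :
    convexHull ℝ ({(1, 1, 1), (1, -1, -1), (-1, 1, -1), (-1, -1, 1)} : Set (ℝ × ℝ × ℝ)) = H := by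
  apply Subset.antisymm
  · apply convexHull_min
    · intro q hq
      simp only [mem_insert_iff, mem_singleton_iff] at hq
      rcases hq with rfl | rfl | rfl | rfl <;> norm_num [H]
    · rintro p hp q hq a b ha hb hab
      simp only [H, mem_setOf_eq] at *
      obtain ⟨h1, h2, h3, h4⟩ := hp
      obtain ⟨k1, k2, k3, k4⟩ := hq
      simp only [Prod.fst_add, Prod.snd_add, Prod.smul_fst, Prod.smul_snd, smul_eq_mul]
      refine ⟨?_, ?_, ?_, ?_⟩ <;> nlinarith
  · intro p hp
    obtain ⟨h1, h2, h3, h4⟩ := hp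
    set w : Fin 4 → ℝ := ![(1 + p.1 + p.2.1 + p.2.2)/4, (1 + p.1 - p.2.1 - p.2.2)/4,
                (1 - p.1 + p.2.1 - p.2.2)/4, (1 - p.1 - p.2.1 + p.2.2)/4] with hw
    set v : Fin 4 → ℝ × ℝ × ℝ := ![(1,1,1), (1,-1,-1), (-1,1,-1), (-1,-1,1)] with hv
    have hsum : ∑ i, w i = 1 := by
      simp [hw, Fin.sum_univ_four]; ring
    have hmem := Finset.centerMass_mem_convexHull (Finset.univ : Finset (Fin 4))
        (w := w) (z := v)
        (s := ({(1, 1, 1), (1, -1, -1), (-1, 1, -1), (-1, -1, 1)} : Set (ℝ × ℝ × ℝ))) ?_ ?_ ?_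
    · rwa [Finset.centerMass_eq_of_sum_1 _ _ hsum, Fin.sum_univ_four,
        show (w 0 • v 0 + w 1 • v 1 + w 2 • v 2 + w 3 • v 3) = p from ?_] at hmem
      have e0 : w 0 = (1 + p.1 + p.2.1 + p.2.2)/4 := rfl
      have e1 : w 1 = (1 + p.1 - p.2.1 - p.2.2)/4 := rfl
      have e2 : w 2 = (1 - p.1 + p.2.1 - p.2.2)/4 := rfl
      have e3 : w 3 = (1 - p.1 - p.2.1 + p.2.2)/4 := rfl
      have f0 : v 0 = ((1:ℝ),(1:ℝ),(1:ℝ)) := rfl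
      have f1 : v 1 = ((1:ℝ),(-1:ℝ),(-1:ℝ)) := rfl
      have f2 : v 2 = ((-1:ℝ),(1:ℝ),(-1:ℝ)) := rfl
      have f3 : v 3 = ((-1:ℝ),(-1:ℝ),(1:ℝ)) := rfl
      rw [e0, e1, e2, e3, f0, f1, f2, f3]
      refine Prod.ext ?_ (Prod.ext ?_ ?_) <;>
        simp only [Prod.fst_add, Prod.snd_add, Prod.smul_fst, Prod.smul_snd, smul_eq_mul] <;>
        ring
    · intro i _
      fin_cases i <;> simp [hw] <;> linarith
    · rw [hsum]; norm_num
    · intro i _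
      fin_cases i <;> simp [hv]


end LV

end
open LV in
/-- The full set of generalized singular values of unital one-qubit Lindblad channels
fills `3/8` of the volume of the tetrahedron of all unital one-qubit CPMs:
`vol(S) = 1` and `vol(T) = 8/3`. -/
theorem lindblad_volume_tetrahedron :
    volume {p : ℝ × ℝ × ℝ | 0 ≤ p.1 * p.2.1 * p.2.2 ∧
        |p.1| ≤ 1 ∧ |p.2.1| ≤ 1 ∧ |p.2.2| ≤ 1 ∧
        |p.2.1| * |p.2.2| ≤ |p.1| ∧ |p.1| * |p.2.2| ≤ |p.2.1| ∧ |p.1| * |p.2.1| ≤ |p.2.2|} =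
      (3 / 8) * volume (convexHull ℝ
        ({(1, 1, 1), (1, -1, -1), (-1, 1, -1), (-1, -1, 1)} : Set (ℝ × ℝ × ℝ))) ∧
    volume {p : ℝ × ℝ × ℝ | 0 ≤ p.1 * p.2.1 * p.2.2 ∧
        |p.1| ≤ 1 ∧ |p.2.1| ≤ 1 ∧ |p.2.2| ≤ 1 ∧
        |p.2.1| * |p.2.2| ≤ |p.1| ∧ |p.1| * |p.2.2| ≤ |p.2.1| ∧ |p.1| * |p.2.1| ≤ |p.2.2|} =
      1 ∧
    volume (convexHull ℝ
        ({(1, 1, 1), (1, -1, -1), (-1, 1, -1), (-1, -1, 1)} : Set (ℝ × ℝ × ℝ))) = 8 / 3 := by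
  have hT : volume (convexHull ℝ
      ({(1, 1, 1), (1, -1, -1), (-1, 1, -1), (-1, -1, 1)} : Set (ℝ × ℝ × ℝ))) = 8 / 3 := by
    rw [LV.hull_eq, LV.volH]
  refine ⟨?_, LV.volS, hT⟩
  rw [LV.volS, hT]
  have h1 : (3 : ENNReal) / 8 = ENNReal.ofReal (3/8) := by
    rw [ENNReal.ofReal_div_of_pos (by norm_num)]; simp
  have h2 : (8 : ENNReal) / 3 = ENNReal.ofReal (8/3) := by
    rw [ENNReal.ofReal_div_of_pos (by norm_num)]; simp
  rw [h1, h2, ← ENNReal.ofReal_mul (by norm_num)]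
  norm_num
end

section
/- Let d ≥ 1, let H be a Hermitian d×d complex matrix, and let D, D' : M_d(ℂ) → M_d(ℂ) be linear maps such that D'(Y) = D(Y) for every traceless Y ∈ M_d(ℂ) and D'(I) = k·D(I) for some real number k. Let X ∈ M_d(ℂ) be traceless and suppose ρ = (1/d)·I + X satisfies i·(ρH − Hρ) + D(ρ) = 0. Then ρ' = (1/d)·I + k·X satisfies i·(ρ'H − Hρ') + D'(ρ') = 0. -/
open Complex Matrix

/-- Scaling theorem for Lindblad steady states: if two dissipators agree on traceless
matrices and the second rescales the shift (its value on the identity) by `k`, then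
rescaling the traceless part of a steady state by `k` gives a steady state of the
second equation. -/
theorem steady_state_scaling (d : ℕ) (hd : 1 ≤ d)
    (H : Matrix (Fin d) (Fin d) ℂ) (hH : H.IsHermitian)
    (D D' : Matrix (Fin d) (Fin d) ℂ →ₗ[ℂ] Matrix (Fin d) (Fin d) ℂ) (k : ℝ)
    (hDD' : ∀ Y : Matrix (Fin d) (Fin d) ℂ, Y.trace = 0 → D' Y = D Y)
    (hshift : D' (1 : Matrix (Fin d) (Fin d) ℂ) = (k : ℂ) • D (1 : Matrix (Fin d) (Fin d) ℂ))
    (X : Matrix (Fin d) (Fin d) ℂ) (hX : X.trace = 0)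
    (hsteady : I • (((1 / d : ℂ) • 1 + X) * H - H * ((1 / d : ℂ) • 1 + X)) +
        D ((1 / d : ℂ) • 1 + X) = 0) :
    I • (((1 / d : ℂ) • 1 + (k : ℂ) • X) * H - H * ((1 / d : ℂ) • 1 + (k : ℂ) • X)) +
        D' ((1 / d : ℂ) • 1 + (k : ℂ) • X) = 0 := by
  have hD' : D' ((1 / d : ℂ) • 1 + (k : ℂ) • X)
      = (k : ℂ) • D ((1 / d : ℂ) • 1 + X) := by
    rw [map_add, _root_.map_smul, _root_.map_smul, hshift, hDD' X hX, map_add, _root_.map_smul,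
      smul_add, smul_comm]
  have hc : ((1 / d : ℂ) • 1 + (k : ℂ) • X) * H - H * ((1 / d : ℂ) • 1 + (k : ℂ) • X)
      = (k : ℂ) • (((1 / d : ℂ) • 1 + X) * H - H * ((1 / d : ℂ) • 1 + X)) := by
    simp only [add_mul, mul_add, smul_mul_assoc, mul_smul_comm, one_mul, mul_one, smul_sub,
      smul_add]
    abel
  rw [hD', hc, smul_comm, ← smul_add, hsteady, smul_zero]
end

section
/- Let H be a Hermitian 4×4 complex matrix, let A_1, …, A_r be 2×2 complex matrices such that at least one A_j is not a scalar multiple of the 2×2 identity, and set L_j = A_j ⊗ I_2 (Kronecker product). Let v ∈ ℂ²⊗ℂ² = ℂ⁴ be a unit vector such that the pure state ρ = v·v† satisfies the steady-state Lindblad equation i·(ρH − Hρ) + Σ_j (2·L_j·ρ·L_j† − ρ·L_j†·L_j − L_j†·L_j·ρ) = 0. Then v is a product vector: there exist a, b ∈ ℂ² with v = a ⊗ b. Consequently ⟨ψ|ρ|ψ⟩ ≤ 1/2, where ψ = (e0⊗e1 − e1⊗e0)/√2. -/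
open Complex Matrix Kronecker
open scoped ComplexOrder

/-- The two-qubit singlet state `(|01⟩ − |10⟩)/√2`. -/
noncomputable def singletVec : Fin 2 × Fin 2 → ℂ := fun p =>
  ((if p = (0, 1) then 1 else 0) - (if p = (1, 0) then 1 else 0)) / (Real.sqrt 2 : ℂ)

lemma hVecMulVec {n : Type*} [Fintype n] (a b x : n → ℂ) :
    Matrix.vecMulVec a b *ᵥ x = (b ⬝ᵥ x) • a := by
  funext i
  simp [Matrix.mulVec, Matrix.vecMulVec_apply, dotProduct, Finset.sum_mul]
  exact Finset.sum_congr rfl fun j _ => by ring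

lemma hSumMulVec {ι n m : Type*} [Fintype n] (s : Finset ι) (M : ι → Matrix m n ℂ)
    (x : n → ℂ) : (∑ j ∈ s, M j) *ᵥ x = ∑ j ∈ s, M j *ᵥ x := by
  funext i
  simp [Matrix.mulVec, dotProduct, Matrix.sum_apply, Finset.sum_mul]
  rw [Finset.sum_comm]

lemma hDotSum {ι n : Type*} [Fintype n] (s : Finset ι) (x : n → ℂ) (y : ι → n → ℂ) :
    x ⬝ᵥ (∑ j ∈ s, y j) = ∑ j ∈ s, x ⬝ᵥ y j := by
  simp [dotProduct, Finset.mul_sum, Finset.sum_apply]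
  rw [Finset.sum_comm]

lemma hAux {ι : Type*} (s : Finset ι) (c m : ι → ℂ)
    (h : ∑ j ∈ s, (2 * c j - m j * 1 - 1 * m j) = 0) : ∑ j ∈ s, (m j - c j) = 0 := by
  have h2 : ∑ j ∈ s, (2 * c j - m j * 1 - 1 * m j) = (-2) * ∑ j ∈ s, (m j - c j) := by
    rw [Finset.mul_sum]; exact Finset.sum_congr rfl fun j _ => by ring
  rw [h2] at h; simpa using h

lemma hStarDot {n : Type*} [Fintype n] (x y : n → ℂ) :
    star x ⬝ᵥ y = starRingEnd ℂ (star y ⬝ᵥ x) := by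
  simp [dotProduct, map_sum]
  exact Finset.sum_congr rfl fun j _ => by ring

lemma hConjT {n : Type*} [Fintype n] (M : Matrix n n ℂ) (x y : n → ℂ) :
    star x ⬝ᵥ (Mᴴ *ᵥ y) = star (M *ᵥ x) ⬝ᵥ y := by
  rw [Matrix.dotProduct_mulVec, Matrix.star_mulVec]

lemma hNormSqDot {n : Type*} [Fintype n] (w : n → ℂ) :
    star w ⬝ᵥ w = ((∑ p, ‖w p‖ ^ 2 : ℝ) : ℂ) := by
  push_cast
  simp [dotProduct]
  exact Finset.sum_congr rfl fun p _ => by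
    rw [Complex.conj_mul']

/-- A pure steady state of a nontrivial local (first-qubit) Lindblad dissipation is a
product state; consequently its singlet fraction is at most `1/2`. -/
theorem pure_steady_state_is_product (H : Matrix (Fin 2 × Fin 2) (Fin 2 × Fin 2) ℂ)
    (hH : H.IsHermitian) (r : ℕ) (A : Fin r → Matrix (Fin 2) (Fin 2) ℂ)
    (hA : ∃ j, ∀ c : ℂ, A j ≠ c • (1 : Matrix (Fin 2) (Fin 2) ℂ))
    (v : Fin 2 × Fin 2 → ℂ) (hv : ∑ p, ‖v p‖ ^ 2 = 1)
    (hsteady : I • (vecMulVec v (star v) * H - H * vecMulVec v (star v)) +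
        ∑ j, ((2 : ℂ) • ((A j ⊗ₖ 1) * vecMulVec v (star v) * (A j ⊗ₖ 1)ᴴ) -
          vecMulVec v (star v) * ((A j ⊗ₖ 1)ᴴ * (A j ⊗ₖ 1)) -
          ((A j ⊗ₖ 1)ᴴ * (A j ⊗ₖ 1)) * vecMulVec v (star v)) = 0) :
    (∃ a b : Fin 2 → ℂ, v = fun p => a p.1 * b p.2) ∧
    star singletVec ⬝ᵥ vecMulVec v (star v) *ᵥ singletVec ≤ (1 / 2 : ℂ) := by
  -- normalization
  have hone : star v ⬝ᵥ v = 1 := by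
    rw [hNormSqDot, hv]; norm_num
  -- scalar form of the steady-state equation
  have h0 := congrArg (fun M => star v ⬝ᵥ M *ᵥ v) hsteady
  simp only [Matrix.add_mulVec, Matrix.sub_mulVec, Matrix.smul_mulVec,
    hSumMulVec, ← Matrix.mulVec_mulVec, hVecMulVec, Matrix.mulVec_smul,
    dotProduct_add, dotProduct_sub, dotProduct_smul,
    hDotSum, Matrix.zero_mulVec, dotProduct_zero,
    hConjT, hone, smul_eq_mul] at h0
  have hc : ∀ (x : Fin 2 × Fin 2 → ℂ), star x ⬝ᵥ v = starRingEnd ℂ (star v ⬝ᵥ x) :=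
    fun x => hStarDot x v
  simp only [hc] at h0
  rw [mul_one, one_mul, sub_self, mul_zero, zero_add] at h0
  have hsum := hAux _ _ _ h0
  -- each Lindblad operator has v as eigenvector
  set α : Fin r → ℂ := fun j => star v ⬝ᵥ ((A j ⊗ₖ (1 : Matrix (Fin 2) (Fin 2) ℂ)) *ᵥ v) with hαdef
  have heig : ∀ j, (A j ⊗ₖ (1 : Matrix (Fin 2) (Fin 2) ℂ)) *ᵥ v = α j • v := by
    intro j
    -- the residual vector
    set w : Fin r → (Fin 2 × Fin 2 → ℂ) :=
      fun j => (A j ⊗ₖ (1 : Matrix (Fin 2) (Fin 2) ℂ)) *ᵥ v - α j • v with hwdef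
    have hterm : ∀ j, star ((A j ⊗ₖ (1 : Matrix (Fin 2) (Fin 2) ℂ)) *ᵥ v) ⬝ᵥ
        ((A j ⊗ₖ (1 : Matrix (Fin 2) (Fin 2) ℂ)) *ᵥ v)
        - starRingEnd ℂ (α j) * α j = star (w j) ⬝ᵥ (w j) := by
      intro j
      simp only [hwdef, star_sub, star_smul, sub_dotProduct,
        dotProduct_sub, smul_dotProduct, dotProduct_smul,
        smul_eq_mul, hone, hc, RCLike.star_def, hαdef]
      ring
    have hsum' : ∑ j, star (w j) ⬝ᵥ (w j) = 0 := by
      rw [← hsum]; exact (Finset.sum_congr rfl fun j _ => (hterm j).symm)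
    have hreal : ∑ j, (∑ p, ‖w j p‖ ^ 2 : ℝ) = 0 := by
      have : ((∑ j, (∑ p, ‖w j p‖ ^ 2 : ℝ) : ℝ) : ℂ) = 0 := by
        push_cast
        rw [← hsum']
        exact Finset.sum_congr rfl fun j _ => by rw [hNormSqDot]; push_cast; rfl
      exact_mod_cast this
    have hz : (∑ p, ‖w j p‖ ^ 2 : ℝ) = 0 := by
      have := (Finset.sum_eq_zero_iff_of_nonneg (fun j _ =>
        Finset.sum_nonneg fun p _ => sq_nonneg ‖w j p‖)).mp hreal j (Finset.mem_univ j)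
      exact this
    have hwz : w j = 0 := by
      funext p
      have := (Finset.sum_eq_zero_iff_of_nonneg (fun p _ => sq_nonneg ‖w j p‖)).mp hz p
        (Finset.mem_univ p)
      have : ‖w j p‖ = 0 := by nlinarith [norm_nonneg (w j p)]
      simpa using norm_eq_zero.mp this
    simp only [hwdef] at hwz
    exact sub_eq_zero.mp hwz
  clear h0 hsum
  obtain ⟨j0, hj0⟩ := hA
  have hcol : ∀ i k : Fin 2, A j0 i 0 * v (0, k) + A j0 i 1 * v (1, k) = α j0 * v (i, k) := by
    intro i k
    have h := congrFun (heig j0) (i, k)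
    simpa [Matrix.mulVec, dotProduct, Fintype.sum_prod_type, Matrix.one_apply,
      Fin.sum_univ_two, mul_ite, mul_zero, mul_one, ite_mul, zero_mul] using h
  set B : Matrix (Fin 2) (Fin 2) ℂ := A j0 - α j0 • 1 with hBdef
  have hBrow : ∀ i k : Fin 2, B i 0 * v (0, k) + B i 1 * v (1, k) = 0 := by
    intro i k
    fin_cases i <;>
      simp [hBdef, Matrix.sub_apply, Matrix.smul_apply, Matrix.one_apply, smul_eq_mul]
    · linear_combination hcol 0 k
    · linear_combination hcol 1 k
  have hBne : ∃ i l, B i l ≠ 0 := by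
    by_contra h
    push_neg at h
    exact hj0 (α j0) (by
      have : B = 0 := by ext i l; exact h i l
      have := sub_eq_zero.mp (hBdef ▸ this)
      exact this)
  obtain ⟨i0, l0, hil⟩ := hBne
  have hprod : ∃ a b : Fin 2 → ℂ, v = fun p => a p.1 * b p.2 := by
    by_cases hr0 : B i0 0 = 0
    · have hr1 : B i0 1 ≠ 0 := by
        fin_cases l0
        · exact absurd hr0 hil
        · exact hil
      refine ⟨![B i0 1, -(B i0 0)], fun k => v (0, k) / B i0 1, ?_⟩
      funext p
      obtain ⟨i, k⟩ := p
      have hb := hBrow i0 k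
      rw [hr0, zero_mul, zero_add] at hb
      have h1 : v (1, k) = 0 := (mul_eq_zero.mp hb).resolve_left hr1
      fin_cases i
      · show v (0, k) = B i0 1 * (v (0, k) / B i0 1)
        field_simp
      · show v (1, k) = -(B i0 0) * (v (0, k) / B i0 1)
        rw [h1, hr0]; ring
    · refine ⟨![B i0 1, -(B i0 0)], fun k => v (1, k) / (-(B i0 0)), ?_⟩
      funext p
      obtain ⟨i, k⟩ := p
      have hb := hBrow i0 k
      fin_cases i
      · show v (0, k) = B i0 1 * (v (1, k) / -(B i0 0))
        have hne : -(B i0 0) ≠ 0 := neg_ne_zero.mpr hr0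
        field_simp
        linear_combination hb
      · show v (1, k) = -(B i0 0) * (v (1, k) / -(B i0 0))
        have hne : -(B i0 0) ≠ 0 := neg_ne_zero.mpr hr0
        field_simp
  obtain ⟨a, b, hab⟩ := hprod
  refine ⟨⟨a, b, hab⟩, ?_⟩
  have hE : star singletVec ⬝ᵥ vecMulVec v (star v) *ᵥ singletVec
      = ((‖star singletVec ⬝ᵥ v‖ ^ 2 : ℝ) : ℂ) := by
    rw [hVecMulVec, dotProduct_smul, smul_eq_mul, hStarDot v singletVec,
      RCLike.conj_mul]
    norm_cast
  have ht1 : star singletVec ⬝ᵥ v = (v (0, 1) - v (1, 0)) / (Real.sqrt 2 : ℂ) := by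
    have hstar : star singletVec = singletVec := by
      funext p
      simp only [Pi.star_apply, singletVec, RCLike.star_def, map_div₀, map_sub,
        apply_ite (starRingEnd ℂ), _root_.map_one, _root_.map_zero, Complex.conj_ofReal]
    rw [hstar]
    simp only [dotProduct, Fintype.sum_prod_type, Fin.sum_univ_two, singletVec]
    norm_num [Prod.ext_iff]
    ring
  have hnorm : ‖star singletVec ⬝ᵥ v‖ ^ 2 = ‖v (0, 1) - v (1, 0)‖ ^ 2 / 2 := by
    rw [ht1, norm_div]
    have h2 : ‖((Real.sqrt 2 : ℝ) : ℂ)‖ = Real.sqrt 2 := by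
      simp [Complex.norm_real, Real.sqrt_nonneg]
    rw [h2, div_pow, Real.sq_sqrt (by norm_num : (0:ℝ) ≤ 2)]
  have hv' : ‖a 0‖^2 * ‖b 0‖^2 + ‖a 0‖^2 * ‖b 1‖^2 + (‖a 1‖^2 * ‖b 0‖^2
      + ‖a 1‖^2 * ‖b 1‖^2) = 1 := by
    rw [hab] at hv
    simpa [Fintype.sum_prod_type, Fin.sum_univ_two, norm_mul, mul_pow] using hv
  have htri : ‖v (0, 1) - v (1, 0)‖ ≤ ‖a 0‖ * ‖b 1‖ + ‖a 1‖ * ‖b 0‖ := by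
    rw [hab]
    exact (norm_sub_le _ _).trans (by rw [norm_mul, norm_mul])
  have hd : ‖v (0, 1) - v (1, 0)‖ ^ 2 ≤ 1 := by
    nlinarith [sq_nonneg (‖a 0‖ * ‖b 0‖ - ‖a 1‖ * ‖b 1‖),
      mul_nonneg (norm_nonneg (a 0)) (norm_nonneg (b 1)),
      mul_nonneg (norm_nonneg (a 1)) (norm_nonneg (b 0)),
      norm_nonneg (v (0, 1) - v (1, 0))]
  rw [hE, hnorm]
  have hle : ‖v (0, 1) - v (1, 0)‖ ^ 2 / 2 ≤ (1/2 : ℝ) := by linarith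
  calc ((‖v (0, 1) - v (1, 0)‖ ^ 2 / 2 : ℝ) : ℂ) ≤ ((1/2 : ℝ) : ℂ) := by
        exact_mod_cast hle
    _ = (1 / 2 : ℂ) := by norm_num
end
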